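/- arXiv:2507.06987 — 7 statements merged into one kernel-verified Lean document; each statement's English description precedes it below -/
import Mathlib

section
/- Let θ ∈ R^{ℤ^d} be a uniformly recurrent rule distribution. If the global update rule H_θ of the associated NUCA is not surjective, then H_θ is not pre-injective. -/
open Finset


/-- binomial two-term bound -/
lemma aux_binom (b M : ℕ) : b^(M+1) + (M+1)*b^M ≤ (b+1)^(M+1) := by
  induction M with
  | zero => simp
  | succ M ih =>
    have h1 : (b+1)^(M+2) = (b+1) * (b+1)^(M+1) := by ring
    have h2 : (b+1) * (b^(M+1) + (M+1)*b^M) ≤ (b+1) * (b+1)^(M+1) :=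
      Nat.mul_le_mul_left _ ih
    calc b^(M+2) + (M+2)*b^(M+1)
        ≤ (b+1) * (b^(M+1) + (M+1)*b^M) := by ring_nf; nlinarith [Nat.zero_le (b^M)]
      _ ≤ (b+1)^(M+2) := by rw [h1]; exact h2

/-- key: a·(a−1)^(a²) ≤ a^(a²) for a ≥ 2 -/
lemma aux_key {a : ℕ} (ha : 2 ≤ a) : a * (a-1)^(a^2) ≤ a^(a^2) := by
  set b := a - 1 with hb
  have hab : a = b + 1 := by omega
  obtain ⟨M, hM⟩ : ∃ M, a^2 = M + 1 := ⟨a^2 - 1, by have : 1 ≤ a^2 := Nat.one_le_pow _ _ (by omega); omega⟩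
  have hbM : b^2 ≤ M := by nlinarith
  have h1 : a * b^(a^2) = b^(M+1) + b^2 * b^M := by
    rw [hM, hab]; ring
  have h2 : b^2 * b^M ≤ (M+1) * b^M := Nat.mul_le_mul_right _ (by omega)
  calc a * b^(a^2) = b^(M+1) + b^2*b^M := h1
    _ ≤ b^(M+1) + (M+1)*b^M := by omega
    _ ≤ (b+1)^(M+1) := aux_binom b M
    _ = a^(a^2) := by rw [hM, hab]

/-- x^(d+1) ≤ y^(d+1) + (d+1)(x−y)x^d for y ≤ x -/
lemma aux_subpow {y x : ℕ} (h : y ≤ x) : ∀ d : ℕ, x^(d+1) ≤ y^(d+1) + (d+1)*(x-y)*x^d := by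
  intro d
  induction d with
  | zero => simp; omega
  | succ d ih =>
    have hyx : y^(d+1) ≤ x^(d+1) := Nat.pow_le_pow_left h _
    calc x^(d+2) = x * x^(d+1) := by ring
      _ ≤ x * (y^(d+1) + (d+1)*(x-y)*x^d) := Nat.mul_le_mul_left _ ih
      _ = x*y^(d+1) + (d+1)*(x-y)*x^(d+1) := by ring
      _ = y*y^(d+1) + (x-y)*y^(d+1) + (d+1)*(x-y)*x^(d+1) := by
            have hx : y + (x-y) = x := by omega
            have hxy : x*y^(d+1) = y*y^(d+1) + (x-y)*y^(d+1) := by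
              conv_lhs => rw [← hx]
              ring
            linarith [hxy]
      _ ≤ y^(d+2) + (x-y)*x^(d+1) + (d+1)*(x-y)*x^(d+1) := by
            have := Nat.mul_le_mul_left (x-y) hyx
            have h2 : y*y^(d+1) = y^(d+2) := by ring
            omega
      _ = y^(d+2) + (d+2)*(x-y)*x^(d+1) := by ring

/-- choice of L -/
lemma aux_chooseL {a w d : ℕ} (ha : 2 ≤ a) (hw : 1 ≤ w) (hd : 1 ≤ d) (r : ℕ) :
    ∃ L : ℕ, 1 ≤ L ∧ (a-1)^(L^d) * a^((L*w+2*r)^d - (L*w)^d) < a^(L^d) := by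
  obtain ⟨d', rfl⟩ : ∃ d', d = d' + 1 := ⟨d - 1, by omega⟩
  set K := a^2 * (2*r*(d'+1)*(w+1)^d') with hK
  refine ⟨max (2*r+1) (K+1), le_trans (by omega) (le_max_left _ _), ?_⟩
  set L := max (2*r+1) (K+1) with hL
  have hL1 : 1 ≤ L := le_trans (by omega) (le_max_left _ _)
  have hLr : 2*r ≤ L := le_trans (by omega) (le_max_left _ _)
  have hLK : K + 1 ≤ L := le_max_right _ _
  set B := (L*w+2*r)^(d'+1) - (L*w)^(d'+1) with hB
  -- bound B
  have h1 : (L*w+2*r)^(d'+1) ≤ (L*w)^(d'+1) + (d'+1)*(2*r)*(L*w+2*r)^d' := by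
    have := aux_subpow (y := L*w) (x := L*w+2*r) (by omega) d'
    simpa using this
  have h2 : L*w+2*r ≤ L*(w+1) := by nlinarith
  have h3 : (L*w+2*r)^d' ≤ (w+1)^d' * L^d' := by
    calc (L*w+2*r)^d' ≤ (L*(w+1))^d' := Nat.pow_le_pow_left h2 _
      _ = (w+1)^d' * L^d' := by rw [mul_pow]; ring
  have hBle : B ≤ 2*r*(d'+1)*(w+1)^d' * L^d' := by
    have : (d'+1)*(2*r)*(L*w+2*r)^d' ≤ (d'+1)*(2*r)*((w+1)^d'*L^d') :=
      Nat.mul_le_mul_left _ h3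
    have hb2 : B ≤ (d'+1)*(2*r)*(L*w+2*r)^d' := by omega
    calc B ≤ (d'+1)*(2*r)*((w+1)^d'*L^d') := le_trans hb2 this
      _ = 2*r*(d'+1)*(w+1)^d' * L^d' := by ring
  -- a²B + 1 ≤ L^(d'+1)
  have hmain : a^2 * B + 1 ≤ L^(d'+1) := by
    have h4 : a^2 * B ≤ K * L^d' := by
      rw [hK]; calc a^2*B ≤ a^2 * (2*r*(d'+1)*(w+1)^d' * L^d') := Nat.mul_le_mul_left _ hBle
        _ = a^2*(2*r*(d'+1)*(w+1)^d') * L^d' := by ring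
    have h5 : 1 ≤ L^d' := Nat.one_le_pow _ _ (by omega)
    calc a^2*B + 1 ≤ K*L^d' + L^d' := by omega
      _ = (K+1)*L^d' := by ring
      _ ≤ L * L^d' := Nat.mul_le_mul_right _ hLK
      _ = L^(d'+1) := by ring
  -- conclude
  set n := L^(d'+1) with hn
  set s := a^2 * B with hs
  have hsn : s + 1 ≤ n := hmain
  have hkey : a^B * (a-1)^s ≤ a^s := by
    have := Nat.pow_le_pow_left (aux_key ha) B
    calc a^B * (a-1)^s = (a * (a-1)^(a^2))^B := by
          rw [mul_pow, ← pow_mul, hs]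
      _ ≤ (a^(a^2))^B := Nat.pow_le_pow_left (aux_key ha) B
      _ = a^s := by rw [← pow_mul, hs]
  have hsplit : (a-1)^n = (a-1)^(n-s) * (a-1)^s := by
    rw [← pow_add]; congr 1; omega
  have hstrict : (a-1)^(n-s) < a^(n-s) :=
    Nat.pow_lt_pow_left (by omega) (by omega)
  calc (a-1)^n * a^B = (a-1)^(n-s) * (a^B * (a-1)^s) := by rw [hsplit]; ring
    _ ≤ (a-1)^(n-s) * a^s := Nat.mul_le_mul_left _ hkey
    _ < a^(n-s) * a^s := (Nat.mul_lt_mul_right (Nat.pow_pos (by omega))).mpr hstrict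
    _ = a^n := by rw [← pow_add]; congr 1; omega


lemma aux_count {X S ι : Type} [Fintype X] [DecidableEq X] [Fintype S] [DecidableEq S]
    [Fintype ι] [DecidableEq ι]
    (B : ι → Finset X) (hdisj : ∀ v v', v ≠ v' → Disjoint (B v) (B v'))
    (q : ι → X → S) :
    Fintype.card {g : X → S // ∀ v, ∃ x ∈ B v, g x ≠ q v x} ≤
      (∏ v, ((Fintype.card S) ^ (B v).card - 1)) *
        (Fintype.card S) ^ (Fintype.card X - ∑ v, (B v).card) := by
  classical
  set U : Finset X := Finset.univ.biUnion B with hU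
  have hcardU : U.card = ∑ v, (B v).card := by
    rw [hU]
    exact Finset.card_biUnion (fun v _ v' _ h => hdisj v v' h)
  let T := (∀ v : ι, {h : {x // x ∈ B v} → S // h ≠ fun x => q v x.1}) ×
      ({x : X // x ∉ U} → S)
  let F : {g : X → S // ∀ v, ∃ x ∈ B v, g x ≠ q v x} → T :=
    fun g => ⟨fun v => ⟨fun x => g.1 x.1, by
        intro hcontra
        obtain ⟨x, hx, hne⟩ := g.2 v
        exact hne (congrFun hcontra ⟨x, hx⟩)⟩,
      fun x => g.1 x.1⟩
  have hinj : Function.Injective F := by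
    intro g g' hgg
    ext x
    by_cases hx : x ∈ U
    · simp only [hU, Finset.mem_biUnion] at hx
      obtain ⟨v, _, hv⟩ := hx
      exact congrArg (fun z => (z.1 v).1 ⟨x, hv⟩) hgg
    · exact congrArg (fun z => z.2 ⟨x, hx⟩) hgg
  have hle := Fintype.card_le_of_injective F hinj
  have h1 : ∀ v : ι, Fintype.card {h : {x // x ∈ B v} → S // h ≠ fun x => q v x.1}
      = (Fintype.card S) ^ (B v).card - 1 := by
    intro v
    rw [Fintype.card_subtype_compl, Fintype.card_subtype_eq, Fintype.card_fun]
    congr 2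
    exact Fintype.card_coe _
  have hUc : Fintype.card {x : X // x ∈ U} = ∑ v, (B v).card := by
    exact (Fintype.card_coe U).trans hcardU
  have hcardsub : Fintype.card ({x : X // x ∉ U} → S)
      = (Fintype.card S) ^ (Fintype.card X - ∑ v, (B v).card) := by
    rw [Fintype.card_fun, Fintype.card_subtype_compl, hUc]
  have hT : Fintype.card T = (∏ v, ((Fintype.card S) ^ (B v).card - 1)) *
      (Fintype.card S) ^ (Fintype.card X - ∑ v, (B v).card) := by
    rw [show Fintype.card T = (∏ v, Fintype.card {h : {x // x ∈ B v} → S // h ≠ fun x => q v x.1})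
        * Fintype.card ({x : X // x ∉ U} → S) from by rw [Fintype.card_prod, Fintype.card_pi]]
    rw [hcardsub]
    congr 1
    exact Finset.prod_congr rfl fun v _ => h1 v
  exact hT ▸ hle

lemma aux_sum_le {X ι : Type} [Fintype X] [DecidableEq X] [Fintype ι] [DecidableEq ι]
    (B : ι → Finset X) (hdisj : ∀ v v', v ≠ v' → Disjoint (B v) (B v')) :
    ∑ v, (B v).card ≤ Fintype.card X := by
  classical
  rw [← Finset.card_biUnion (fun v _ v' _ h => hdisj v v' h)]
  exact le_trans (Finset.card_le_card (Finset.subset_univ _)) (le_of_eq Finset.card_univ)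

lemma aux_orphan {S : Type} [Fintype S] [Nonempty S] {d m : ℕ}
    (N : Fin m → (Fin d → ℤ)) (θ : (Fin d → ℤ) → ((Fin m → S) → S))
    (H : ((Fin d → ℤ) → S) → ((Fin d → ℤ) → S))
    (hH : H = fun c x => θ x (fun i => c (x + N i)))
    (hns : ¬ Function.Surjective H) :
    ∃ (E : Finset (Fin d → ℤ)) (p : (Fin d → ℤ) → S),
      E.Nonempty ∧ ∀ c, ∃ x ∈ E, H c x ≠ p x := by
  classical
  letI : TopologicalSpace S := ⊥
  haveI : DiscreteTopology S := ⟨rfl⟩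
  have hcont : Continuous H := by
    rw [hH]
    refine continuous_pi fun x => ?_
    exact Continuous.comp continuous_of_discreteTopology
      (continuous_pi fun i => continuous_apply (x + N i))
  have hcr : IsClosed (Set.range H) := (isCompact_range hcont).isClosed
  obtain ⟨c₀, hc₀⟩ : ∃ c₀, c₀ ∉ Set.range H := by
    by_contra h
    push_neg at h
    exact hns fun c => h c
  have hopen : IsOpen (Set.range H)ᶜ := hcr.isOpen_compl
  obtain ⟨I, u, hu, hsub⟩ := isOpen_pi_iff.mp hopen c₀ hc₀
  have horph : ∀ c, ∃ x ∈ I, H c x ≠ c₀ x := by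
    intro c
    by_contra hno
    push_neg at hno
    have hmem : H c ∈ (I : Set (Fin d → ℤ)).pi u := by
      intro x hx
      rw [hno x hx]
      exact (hu x hx).2
    exact (hsub hmem) ⟨c, rfl⟩
  refine ⟨I, c₀, ?_, horph⟩
  rcases Finset.eq_empty_or_nonempty I with h | h
  · exfalso
    obtain ⟨x, hx, _⟩ := horph (fun _ => Classical.arbitrary S)
    simp [h] at hx
  · exact h



/-- A configuration `θ` over ℤ^d is uniformly recurrent if for every finite domain `D`
there is a width `w > 0` such that every hypercube of width `w` contains a translated
copy of `θ|_D`. -/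
def UniformlyRecurrent {d : ℕ} {R : Type} (θ : (Fin d → ℤ) → R) : Prop :=
  ∀ D : Finset (Fin d → ℤ), ∃ w : ℕ, 0 < w ∧
    ∀ a : Fin d → ℤ, ∃ t : Fin d → ℤ,
      (∀ x ∈ D, ∀ i, a i ≤ x i + t i ∧ x i + t i < a i + (w : ℤ)) ∧
      (∀ x ∈ D, θ (x + t) = θ x)

/-- Pre-injectivity: any two distinct configurations that differ in only finitely
many cells have distinct images. -/
def PreInjective {G S : Type} (H : (G → S) → (G → S)) : Prop :=
  ∀ c e : G → S, {x : G | c x ≠ e x}.Finite → H c = H e → c = e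

set_option maxHeartbeats 2000000 in
/-- if `θ` is a uniformly recurrent rule distribution over ℤ^d and the
global update rule `H_θ` is not surjective, then `H_θ` is not pre-injective. -/
theorem stmt_4 {S : Type} [Fintype S] [Nonempty S] {d m : ℕ} (hd : 0 < d)
    (N : Fin m → (Fin d → ℤ)) (θ : (Fin d → ℤ) → ((Fin m → S) → S))
    (hrec : UniformlyRecurrent θ)
    (H : ((Fin d → ℤ) → S) → ((Fin d → ℤ) → S))
    (hH : H = fun c x => θ x (fun i => c (x + N i)))
    (hns : ¬ Function.Surjective H) :
    ¬ PreInjective H := by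
  classical
  intro hpre
  set k := Fintype.card S with hk
  have hk2 : 2 ≤ k := by
    by_contra h
    push_neg at h
    have hss : Subsingleton S := by
      have : Fintype.card S ≤ 1 := by omega
      exact Fintype.card_le_one_iff_subsingleton.mp this
    exact hns fun c => ⟨c, funext fun x => Subsingleton.elim _ _⟩
  obtain ⟨E, p, hEne, horph⟩ := aux_orphan N θ H hH hns
  set e := E.card with he
  have he1 : 1 ≤ e := Finset.card_pos.mpr hEne
  obtain ⟨w, hwpos, hrec'⟩ := hrec E
  choose t ht1 ht2 using hrec'
  -- translated orphans
  have htr : ∀ (a : Fin d → ℤ) (c : (Fin d → ℤ) → S), ∃ x ∈ E, H c (x + t a) ≠ p x := by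
    intro a c
    by_contra hno
    push_neg at hno
    obtain ⟨x, hxE, hxne⟩ := horph (fun y => c (y + t a))
    apply hxne
    have h1 : H (fun y => c (y + t a)) x = H c (x + t a) := by
      simp only [hH]
      rw [← ht2 a x hxE]
      congr 1
      funext i
      congr 1
      exact add_right_comm x (N i) (t a)
    rw [h1, hno x hxE]
  -- neighbourhood radius
  set r := Finset.univ.sup (fun i : Fin m => Finset.univ.sup fun j : Fin d => (N i j).natAbs)
    with hr
  have hNr : ∀ i j, -(r : ℤ) ≤ N i j ∧ N i j ≤ r := by
    intro i j
    have h2 : (Finset.univ.sup fun j => (N i j).natAbs) ≤ r := by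
      rw [hr]
      exact Finset.le_sup (f := fun i => Finset.univ.sup fun j => (N i j).natAbs)
        (Finset.mem_univ i)
    have h1 : (N i j).natAbs ≤ r :=
      le_trans (Finset.le_sup (f := fun j => (N i j).natAbs) (Finset.mem_univ j)) h2
    omega
  -- choose L
  set a := k ^ e with ha
  have ha2 : 2 ≤ a := le_trans hk2 (Nat.le_self_pow (by omega) k)
  obtain ⟨L, hL1, harith⟩ := aux_chooseL ha2 hwpos hd r
  set n := L * w with hn
  have hn1 : 1 ≤ n := Nat.one_le_iff_ne_zero.mpr (by positivity)
  -- geometry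
  set A : (Fin d → Fin L) → (Fin d → ℤ) := fun v i => (v i : ℤ) * w with hA
  set T : (Fin d → Fin L) → (Fin d → ℤ) := fun v => t (A v) with hT
  set Q : Finset (Fin d → ℤ) := Finset.Icc (fun _ => 0) (fun _ => (n : ℤ) - 1) with hQ
  set Qp : Finset (Fin d → ℤ) :=
    Finset.Icc (fun _ => -(r : ℤ)) (fun _ => (n : ℤ) - 1 + r) with hQp
  have hQmem : ∀ z : Fin d → ℤ, z ∈ Q ↔ ∀ i, 0 ≤ z i ∧ z i ≤ (n : ℤ) - 1 := by
    intro z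
    rw [hQ, Finset.mem_Icc]
    constructor
    · rintro ⟨h1, h2⟩ i; exact ⟨h1 i, h2 i⟩
    · intro h; exact ⟨fun i => (h i).1, fun i => (h i).2⟩
  have hQpmem : ∀ z : Fin d → ℤ, z ∈ Qp ↔ ∀ i, -(r : ℤ) ≤ z i ∧ z i ≤ (n : ℤ) - 1 + r := by
    intro z
    rw [hQp, Finset.mem_Icc]
    constructor
    · rintro ⟨h1, h2⟩ i; exact ⟨h1 i, h2 i⟩
    · intro h; exact ⟨fun i => (h i).1, fun i => (h i).2⟩
  set B : (Fin d → Fin L) → Finset (Fin d → ℤ) := fun v => E.image (· + T v) with hB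
  have hBbound : ∀ v, ∀ z ∈ B v, ∀ i, A v i ≤ z i ∧ z i < A v i + w := by
    intro v z hz i
    rw [hB] at hz
    simp only [Finset.mem_image] at hz
    obtain ⟨x, hxE, rfl⟩ := hz
    exact ht1 (A v) x hxE i
  have hAvbound : ∀ v i, 0 ≤ A v i ∧ A v i + w ≤ (n : ℤ) := by
    intro v i
    constructor
    · exact mul_nonneg (Int.natCast_nonneg _) (Int.natCast_nonneg _)
    · have h1 : ((v i : ℕ) : ℤ) + 1 ≤ (L : ℤ) := by
        have := (v i).is_lt
        omega
      have h2 : (((v i : ℕ) : ℤ) + 1) * w ≤ (L : ℤ) * w :=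
        mul_le_mul_of_nonneg_right h1 (Int.natCast_nonneg _)
      have h3 : ((n : ℕ) : ℤ) = (L : ℤ) * w := by rw [hn]; push_cast; ring
      rw [hA]
      simp only
      rw [h3]
      nlinarith [h2]
  have hBQ : ∀ v, ∀ z ∈ B v, z ∈ Q := by
    intro v z hz
    rw [hQmem]
    intro i
    have h1 := hBbound v z hz i
    have h2 := hAvbound v i
    omega
  have hQQp : Q ⊆ Qp := by
    intro z hz
    rw [hQmem] at hz
    rw [hQpmem]
    intro i
    have := hz i
    omega
  have hBdisj : ∀ v v', v ≠ v' → Disjoint (B v) (B v') := by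
    intro v v' hne
    rw [Finset.disjoint_left]
    intro z hz hz'
    apply hne
    funext i
    have h1 := hBbound v z hz i
    have h2 := hBbound v' z hz' i
    have hA1 : A v i = (v i : ℤ) * w := rfl
    have hA2 : A v' i = (v' i : ℤ) * w := rfl
    rw [hA1] at h1
    rw [hA2] at h2
    have hzw : (0 : ℤ) < w := by exact_mod_cast hwpos
    have hle1 : (v i : ℤ) * w < ((v' i : ℤ) + 1) * w := by nlinarith
    have hle2 : (v' i : ℤ) * w < ((v i : ℤ) + 1) * w := by nlinarith
    have hv1 : (v i : ℤ) < (v' i : ℤ) + 1 := lt_of_mul_lt_mul_right hle1 (le_of_lt hzw)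
    have hv2 : (v' i : ℤ) < (v i : ℤ) + 1 := lt_of_mul_lt_mul_right hle2 (le_of_lt hzw)
    have : ((v i : ℕ) : ℤ) = ((v' i : ℕ) : ℤ) := by omega
    have hval : (v i : ℕ) = (v' i : ℕ) := by exact_mod_cast this
    exact Fin.ext hval
  have hBcard : ∀ v, (B v).card = e := by
    intro v
    rw [hB]
    simp only
    rw [Finset.card_image_of_injective E (add_left_injective (T v))]
  -- box cardinalities
  have hQcard : Q.card = n ^ d := by
    rw [hQ, Pi.card_Icc]
    have h1 : ∀ i : Fin d, (Finset.Icc (0 : ℤ) ((n : ℤ) - 1)).card = n := by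
      intro i
      rw [Int.card_Icc]
      omega
    rw [Finset.prod_congr rfl fun i _ => h1 i, Finset.prod_const, Finset.card_univ,
      Fintype.card_fin]
  have hQpcard : Qp.card = (n + 2 * r) ^ d := by
    rw [hQp, Pi.card_Icc]
    have h1 : (Finset.Icc (-(r : ℤ)) ((n : ℤ) - 1 + r)).card = n + 2 * r := by
      rw [Int.card_Icc]
      omega
    rw [Finset.prod_congr rfl fun i (_ : i ∈ Finset.univ) => h1, Finset.prod_const,
      Finset.card_univ, Fintype.card_fin]
  -- lift blocks to the subtype over Qp
  set X := {x : Fin d → ℤ // x ∈ Qp} with hX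
  set B' : (Fin d → Fin L) → Finset X :=
    fun v => Finset.univ.filter (fun x : X => (x : Fin d → ℤ) ∈ B v) with hB'
  have hB'im : ∀ v, (B' v).image Subtype.val = B v := by
    intro v
    ext z
    simp only [hB', Finset.mem_image, Finset.mem_filter, Finset.mem_univ, true_and]
    constructor
    · rintro ⟨x, hx, rfl⟩; exact hx
    · intro hz; exact ⟨⟨z, hQQp (hBQ v z hz)⟩, hz, rfl⟩
  have hB'card : ∀ v, (B' v).card = e := by
    intro v
    rw [← hBcard v, ← hB'im v, Finset.card_image_of_injective _ Subtype.val_injective]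
  have hB'disj : ∀ v v', v ≠ v' → Disjoint (B' v) (B' v') := by
    intro v v' hne
    rw [Finset.disjoint_left]
    intro x hx hx'
    simp only [hB', Finset.mem_filter, Finset.mem_univ, true_and] at hx hx'
    exact Finset.disjoint_left.mp (hBdisj v v' hne) hx hx'
  set q' : (Fin d → Fin L) → X → S := fun v x => p ((x : Fin d → ℤ) - T v) with hq'
  -- extension of patterns on Q
  set s₀ : S := Classical.arbitrary S with hs₀
  set ext : ({x : Fin d → ℤ // x ∈ Q} → S) → ((Fin d → ℤ) → S) :=
    fun u x => if h : x ∈ Q then u ⟨x, h⟩ else s₀ with hext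
  -- outside Qp the neighbourhood misses Q
  have houtside : ∀ x : Fin d → ℤ, x ∉ Qp → ∀ i, x + N i ∉ Q := by
    intro x hx i
    rw [hQpmem] at hx
    push_neg at hx
    obtain ⟨j, hj⟩ := hx
    rw [hQmem]
    push_neg
    refine ⟨j, ?_⟩
    have h1 := hNr i j
    have h2 : (x + N i) j = x j + N i j := rfl
    intro hge
    rw [h2] at hge ⊢
    omega
  -- the injection
  set Φ : ({x : Fin d → ℤ // x ∈ Q} → S) → {g : X → S // ∀ v, ∃ x ∈ B' v, g x ≠ q' v x} :=
    fun u => ⟨fun x => H (ext u) x.1, by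
      intro v
      obtain ⟨y, hyE, hyne⟩ := htr (A v) (ext u)
      have hyB : y + T v ∈ B v := by
        rw [hB]
        exact Finset.mem_image.mpr ⟨y, hyE, rfl⟩
      refine ⟨⟨y + T v, hQQp (hBQ v _ hyB)⟩, ?_, ?_⟩
      · simp only [hB', Finset.mem_filter, Finset.mem_univ, true_and]
        exact hyB
      · simp only [hq']
        rw [show (y + T v) - T v = y from add_sub_cancel_right y (T v)]
        exact hyne⟩ with hΦ
  have hΦinj : Function.Injective Φ := by
    intro u u' huu
    have hHeq : H (ext u) = H (ext u') := by
      funext x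
      by_cases hx : x ∈ Qp
      · have := congrArg (fun g => g.1 ⟨x, hx⟩) huu
        exact this
      · simp only [hH]
        congr 1
        funext i
        have hni := houtside x hx i
        simp only [hext]
        rw [dif_neg hni, dif_neg hni]
    have hfin : {x : Fin d → ℤ | ext u x ≠ ext u' x}.Finite := by
      apply Set.Finite.subset Q.finite_toSet
      intro x hx
      simp only [Set.mem_setOf_eq, hext] at hx
      rw [Finset.mem_coe]
      by_contra hxQ
      rw [dif_neg hxQ, dif_neg hxQ] at hx
      exact hx rfl
    have hexteq := hpre (ext u) (ext u') hfin hHeq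
    funext x
    have := congrFun hexteq x.1
    simp only [hext, dif_pos x.2] at this
    convert this using 2 <;> exact (Subtype.eta _ _).symm
  -- cardinality chain
  have hcard1 : Fintype.card ({x : Fin d → ℤ // x ∈ Q} → S) = k ^ (n ^ d) := by
    rw [Fintype.card_fun, Fintype.card_coe, hQcard, hk]
  have hXcard : Fintype.card X = (n + 2 * r) ^ d := by
    exact (Fintype.card_of_subtype Qp fun x => Iff.rfl).trans hQpcard
  have hιcard : Fintype.card (Fin d → Fin L) = L ^ d := by
    rw [Fintype.card_fun, Fintype.card_fin, Fintype.card_fin]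
  have hsum : ∑ v : Fin d → Fin L, (B' v).card = L ^ d * e := by
    rw [Finset.sum_congr rfl fun v _ => hB'card v, Finset.sum_const, Finset.card_univ,
      hιcard, smul_eq_mul]
  have hprod : ∏ v : Fin d → Fin L, (k ^ (B' v).card - 1) = (a - 1) ^ (L ^ d) := by
    rw [Finset.prod_congr rfl fun v _ => by rw [hB'card v], Finset.prod_const,
      Finset.card_univ, hιcard, ha]
  have hchain := le_trans (Fintype.card_le_of_injective Φ hΦinj)
    (aux_count B' hB'disj q')
  rw [hcard1, hXcard, ← hk, hsum, hprod] at hchain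
  -- hchain : k ^ (n ^ d) ≤ (a-1)^(L^d) * k ^ ((n+2r)^d - L^d * e)
  have hsle : L ^ d * e ≤ (n + 2 * r) ^ d := by
    have := aux_sum_le B' hB'disj
    rw [hsum, hXcard] at this
    exact this
  have hnle : n ^ d ≤ (n + 2 * r) ^ d := Nat.pow_le_pow_left (by omega) d
  have hstep1 : k ^ (n ^ d) * k ^ (L ^ d * e) ≤ (a - 1) ^ (L ^ d) * k ^ ((n + 2 * r) ^ d) := by
    calc k ^ (n ^ d) * k ^ (L ^ d * e)
        ≤ ((a - 1) ^ (L ^ d) * k ^ ((n + 2 * r) ^ d - L ^ d * e)) * k ^ (L ^ d * e) :=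
          Nat.mul_le_mul_right _ hchain
      _ = (a - 1) ^ (L ^ d) * (k ^ ((n + 2 * r) ^ d - L ^ d * e) * k ^ (L ^ d * e)) := by ring
      _ = (a - 1) ^ (L ^ d) * k ^ ((n + 2 * r) ^ d) := by
          rw [← pow_add, Nat.sub_add_cancel hsle]
  have hstep2 : k ^ ((n + 2 * r) ^ d) = k ^ (n ^ d) * k ^ ((n + 2 * r) ^ d - n ^ d) := by
    rw [← pow_add, Nat.add_sub_cancel' hnle]
  have hstep3 : k ^ (L ^ d * e) ≤ (a - 1) ^ (L ^ d) * k ^ ((n + 2 * r) ^ d - n ^ d) := by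
    have hkpos : 0 < k ^ (n ^ d) := Nat.pow_pos (by omega)
    apply Nat.le_of_mul_le_mul_left
    calc k ^ (n ^ d) * k ^ (L ^ d * e)
        ≤ (a - 1) ^ (L ^ d) * k ^ ((n + 2 * r) ^ d) := hstep1
      _ = k ^ (n ^ d) * ((a - 1) ^ (L ^ d) * k ^ ((n + 2 * r) ^ d - n ^ d)) := by
          rw [hstep2]; ring
    exact hkpos
  have hfinal : a ^ (L ^ d) ≤ (a - 1) ^ (L ^ d) * a ^ ((n + 2 * r) ^ d - n ^ d) := by
    have h1 : a ^ (L ^ d) = k ^ (L ^ d * e) := by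
      rw [ha, ← pow_mul, Nat.mul_comm e (L ^ d)]
    have h2 : k ^ ((n + 2 * r) ^ d - n ^ d) ≤ a ^ ((n + 2 * r) ^ d - n ^ d) :=
      Nat.pow_le_pow_left (Nat.le_self_pow (by omega) k) _
    calc a ^ (L ^ d) = k ^ (L ^ d * e) := h1
      _ ≤ (a - 1) ^ (L ^ d) * k ^ ((n + 2 * r) ^ d - n ^ d) := hstep3
      _ ≤ (a - 1) ^ (L ^ d) * a ^ ((n + 2 * r) ^ d - n ^ d) := Nat.mul_le_mul_left _ h2
  omega
end

section
/- Let θ ∈ R^{ℤ^d} be a uniformly recurrent rule distribution. If the global update rule H_θ of the associated NUCA is not pre-injective, then H_θ is not surjective. -/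
lemma aux_pow_succ_ge (a n : ℕ) : a^(n+1) + (n+1)*a^n ≤ (a+1)^(n+1) := by
  induction n with
  | zero => simp
  | succ n ih =>
    calc a^(n+2) + (n+2)*a^(n+1)
        ≤ (a+1) * (a^(n+1) + (n+1)*a^n) := by
          ring_nf
          nlinarith [Nat.zero_le (a^n), Nat.zero_le (a^n * n)]
      _ ≤ (a+1) * (a+1)^(n+1) := Nat.mul_le_mul_left _ ih
      _ = (a+1)^(n+2) := by ring

lemma aux_two_mul_le (A : ℕ) (hA : 2 ≤ A) : 2 * (A-1)^(A-1) ≤ A^(A-1) := by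
  obtain ⟨B, rfl⟩ : ∃ B, A = B + 2 := ⟨A - 2, by omega⟩
  calc 2 * (B+2-1)^(B+2-1) = (B+1)^(B+1) + (B+1)*(B+1)^B := by
        simp only [show B+2-1 = B+1 from rfl]; ring
    _ ≤ (B+2)^(B+1) := by simpa using aux_pow_succ_ge (B+1) B
    _ = (B+2)^(B+2-1) := by norm_num

lemma aux_pow_div (A K : ℕ) (hA : 2 ≤ A) : (A-1)^K * 2^(K/(A-1)) ≤ A^K := by
  obtain ⟨q, r, hr, hK⟩ : ∃ q r, r < A - 1 ∧ K = (A-1)*q + r :=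
    ⟨K/(A-1), K%(A-1), Nat.mod_lt _ (by omega), (Nat.div_add_mod K (A-1)).symm⟩
  have hq : K/(A-1) = q := by
    subst hK; rw [Nat.mul_add_div (by omega), Nat.div_eq_of_lt hr]; omega
  calc (A-1)^K * 2^(K/(A-1)) = (2*(A-1)^(A-1))^q * (A-1)^r := by
        rw [hq, hK, pow_add, pow_mul]; ring
    _ ≤ (A^(A-1))^q * A^r := by
        apply Nat.mul_le_mul
        · exact Nat.pow_le_pow_left (aux_two_mul_le A hA) q
        · exact Nat.pow_le_pow_left (by omega) r
    _ = A^K := by rw [hK, pow_add, pow_mul]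

lemma aux_boundary (n e d : ℕ) : (n+e)^(d+1) ≤ n^(d+1) + (d+1)*e*(n+e)^d := by
  induction d with
  | zero => simp
  | succ d ih =>
    have h1 : n^(d+1) ≤ (n+e)^(d+1) := Nat.pow_le_pow_left (by omega) _
    calc (n+e)^(d+2) = (n+e) * (n+e)^(d+1) := by ring
      _ ≤ (n+e) * (n^(d+1) + (d+1)*e*(n+e)^d) := Nat.mul_le_mul_left _ ih
      _ = n^(d+2) + e*n^(d+1) + (d+1)*e*(n+e)^(d+1) := by ring
      _ ≤ n^(d+2) + e*(n+e)^(d+1) + (d+1)*e*(n+e)^(d+1) := by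
          have := Nat.mul_le_mul_left e h1; omega
      _ = n^(d+2) + (d+2)*e*(n+e)^(d+1) := by ring


lemma int_box_uniq {w a b x : ℤ} (hw : 0 < w) (h1 : w*a ≤ x) (h2 : x < w*a + w)
    (h3 : w*b ≤ x) (h4 : x < w*b + w) : a = b := by
  by_contra h
  rcases lt_or_gt_of_ne h with hlt | hlt
  · have h5 : a + 1 ≤ b := by omega
    have := mul_le_mul_of_nonneg_left h5 hw.le
    nlinarith
  · have h5 : b + 1 ≤ a := by omega
    have := mul_le_mul_of_nonneg_left h5 hw.le
    nlinarith


noncomputable def boxF {d : ℕ} (a : Fin d → ℤ) (n : ℕ) : Finset (Fin d → ℤ) :=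
  Fintype.piFinset fun i => Finset.Ico (a i) (a i + n)

lemma mem_boxF {d : ℕ} {a : Fin d → ℤ} {n : ℕ} {x : Fin d → ℤ} :
    x ∈ boxF a n ↔ ∀ i, a i ≤ x i ∧ x i < a i + n := by
  simp [boxF, Fintype.mem_piFinset]

lemma card_boxF {d : ℕ} (a : Fin d → ℤ) (n : ℕ) : (boxF a n).card = n ^ d := by
  simp [boxF, Fintype.card_piFinset]

open Classical in
noncomputable def nm {d k : ℕ} {S : Type} (D : Finset (Fin d → ℤ))
    (t : (Fin d → Fin k) → (Fin d → ℤ)) (c e : (Fin d → ℤ) → S)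
    (z : (Fin d → ℤ) → S) : (Fin d → ℤ) → S :=
  fun x => if h : ∃ j, x - t j ∈ D ∧ ∀ y ∈ D, z (y + t j) = c y
           then e (x - t h.choose) else z x

section nmLemmas
variable {d k : ℕ} {S : Type} {D : Finset (Fin d → ℤ)}
  {t : (Fin d → Fin k) → (Fin d → ℤ)} {c e z : (Fin d → ℤ) → S}
  (huniq : ∀ (j j' : Fin d → Fin k) (x : Fin d → ℤ), x - t j ∈ D → x - t j' ∈ D → j = j')

include huniq

lemma nm_matched {j : Fin d → Fin k} (hj : ∀ y ∈ D, z (y + t j) = c y)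
    {y : Fin d → ℤ} (hy : y ∈ D) : nm D t c e z (y + t j) = e y := by
  have hmem : (y + t j) - t j ∈ D := by simpa using hy
  have h : ∃ j', (y + t j) - t j' ∈ D ∧ ∀ y' ∈ D, z (y' + t j') = c y' := ⟨j, hmem, hj⟩
  rw [nm, dif_pos h]
  have := h.choose_spec.1
  have hjj : h.choose = j := huniq _ _ _ this hmem
  rw [hjj]; congr 1; abel

lemma nm_unmatched {j : Fin d → Fin k} (hnj : ¬ ∀ y ∈ D, z (y + t j) = c y)
    {x : Fin d → ℤ} (hx : x - t j ∈ D) : nm D t c e z x = z x := by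
  rw [nm]
  split
  · next h =>
    exact absurd (huniq _ _ _ h.choose_spec.1 hx ▸ h.choose_spec.2) hnj
  · rfl

omit huniq in
lemma nm_outside {Δ : Finset (Fin d → ℤ)} (hΔD : Δ ⊆ D)
    (hce : ∀ y, y ∉ (Δ : Set _) → c y = e y)
    {x : Fin d → ℤ} (hx : ∀ j, x - t j ∉ Δ) : nm D t c e z x = z x := by
  rw [nm]
  split
  · next h =>
    obtain ⟨hmem, hm⟩ := h.choose_spec
    have hz : z ((x - t h.choose) + t h.choose) = c (x - t h.choose) := hm _ hmem
    have hxx : (x - t h.choose) + t h.choose = x := by abel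
    rw [hxx] at hz
    rw [hz, hce _ (by simpa using hx h.choose)]
  · rfl

end nmLemmas



set_option maxHeartbeats 1600000 in
/-- if `θ` is a uniformly recurrent rule distribution over ℤ^d and the
global update rule `H_θ` is not pre-injective, then `H_θ` is not surjective. -/
theorem stmt_5 {S : Type} [Fintype S] [Nonempty S] {d m : ℕ} (hd : 0 < d)
    (N : Fin m → (Fin d → ℤ)) (θ : (Fin d → ℤ) → ((Fin m → S) → S))
    (hrec : UniformlyRecurrent θ)
    (H : ((Fin d → ℤ) → S) → ((Fin d → ℤ) → S))
    (hH : H = fun c x => θ x (fun i => c (x + N i)))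
    (hnp : ¬ PreInjective H) :
    ¬ Function.Surjective H := by
  classical
  intro hs
  -- S is nontrivial
  by_cases htriv : Subsingleton S
  · exact hnp fun c e _ _ => funext fun x => Subsingleton.elim _ _
  have hnt : Nontrivial S := not_subsingleton_iff_nontrivial.mp htriv
  set s := Fintype.card S with hsdef
  have hs2 : 2 ≤ s := Fintype.one_lt_card
  -- counterexample to pre-injectivity
  rw [PreInjective] at hnp; push_neg at hnp
  obtain ⟨c, e, hfin, hce, hne⟩ := hnp
  set Δ : Finset (Fin d → ℤ) := hfin.toFinset with hΔdef
  have hΔmem : ∀ x, x ∈ Δ ↔ c x ≠ e x := fun x => hfin.mem_toFinset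
  obtain ⟨δ0, hδ0⟩ : Δ.Nonempty := by
    obtain ⟨x, hx⟩ := Function.ne_iff.mp hne
    exact ⟨x, (hΔmem x).mpr hx⟩
  have hδ0' : c δ0 ≠ e δ0 := (hΔmem δ0).mp hδ0
  have hoff : ∀ y, y ∉ (Δ : Set (Fin d → ℤ)) → c y = e y := by
    intro y hy
    by_contra h
    exact hy (by exact_mod_cast (hΔmem y).mpr h)
  -- the finite window D
  set D : Finset (Fin d → ℤ) :=
    (Δ ∪ Finset.univ.biUnion (fun p : Fin m × Fin m =>
        Δ.image (fun δ0 => δ0 + (N p.2 - N p.1)))) ∪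
      Finset.univ.biUnion (fun i : Fin m => Δ.image (fun δ0 => δ0 - N i)) with hDdef
  have hΔD : Δ ⊆ D := (Finset.subset_union_left.trans Finset.subset_union_left)
  have hD1 : ∀ (x : Fin d → ℤ) (i i' : Fin m), x + N i ∈ Δ → x + N i' ∈ D := by
    intro x i i' hx
    apply Finset.mem_union_left
    apply Finset.mem_union_right
    rw [Finset.mem_biUnion]
    exact ⟨(i, i'), Finset.mem_univ _, Finset.mem_image.mpr ⟨x + N i, hx, by abel⟩⟩
  have hD2 : ∀ (x : Fin d → ℤ) (i : Fin m), x + N i ∈ Δ → x ∈ D := by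
    intro x i hx
    apply Finset.mem_union_right
    rw [Finset.mem_biUnion]
    exact ⟨i, Finset.mem_univ _, Finset.mem_image.mpr ⟨x + N i, hx, by abel⟩⟩
  -- recurrence width
  obtain ⟨w, hw, hrecw⟩ := hrec D
  -- numeric parameters
  set c0 := D.card with hc0def
  have hc0 : 1 ≤ c0 := Finset.card_pos.mpr ⟨δ0, hΔD hδ0⟩
  set A := s ^ c0 with hAdef
  have hA : 2 ≤ A := le_trans hs2 (Nat.le_self_pow (by omega) s)
  set r' : ℕ := Finset.univ.sup fun i : Fin m =>
    Finset.univ.sup fun i' : Fin d => (N i i').natAbs with hr'def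
  have hr' : ∀ (i : Fin m) (i' : Fin d), -(r' : ℤ) ≤ N i i' ∧ N i i' ≤ r' := by
    intro i i'
    have h1 : (N i i').natAbs ≤ Finset.univ.sup fun i'' : Fin d => (N i i'').natAbs :=
      Finset.le_sup (f := fun i'' : Fin d => (N i i'').natAbs) (Finset.mem_univ i')
    have h2 : (Finset.univ.sup fun i'' : Fin d => (N i i'').natAbs) ≤ r' :=
      Finset.le_sup (f := fun i : Fin m => Finset.univ.sup fun i' : Fin d => (N i i').natAbs)
        (Finset.mem_univ i)
    omega
  set C1 := d * (2*r') * (w + 2*r')^(d-1) with hC1def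
  set k := (A-1)*(s*C1+1) + 1 with hkdef
  have hk1 : 1 ≤ k := by omega
  -- the translations
  choose t ht1 ht2 using fun j : Fin d → Fin k => hrecw (fun i => (w : ℤ) * ((j i : ℕ) : ℤ))
  have hsubcube : ∀ (j : Fin d → Fin k) (x : Fin d → ℤ), x - t j ∈ D →
      ∀ i, (w:ℤ) * ((j i : ℕ) : ℤ) ≤ x i ∧ x i < (w:ℤ) * ((j i : ℕ) : ℤ) + w := by
    intro j x hx i
    have h := ht1 j _ hx i
    simpa [Pi.sub_apply, sub_add_cancel] using h
  have huniq : ∀ (j j' : Fin d → Fin k) (x : Fin d → ℤ),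
      x - t j ∈ D → x - t j' ∈ D → j = j' := by
    intro j j' x hj hj'
    funext i
    have h1 := hsubcube j x hj i
    have h2 := hsubcube j' x hj' i
    have : ((j i : ℕ) : ℤ) = ((j' i : ℕ) : ℤ) :=
      int_box_uniq (by exact_mod_cast hw) h1.1 h1.2 h2.1 h2.2
    exact Fin.ext (by exact_mod_cast this)
  -- the boxes
  set B := boxF (fun _ : Fin d => (0:ℤ)) (k*w) with hBdef
  set Bp := boxF (fun _ : Fin d => -(r':ℤ)) (k*w + 2*r') with hBpdef
  have hBBp : B ⊆ Bp := by
    intro x hx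
    rw [mem_boxF] at hx ⊢
    intro i
    have := hx i
    push_cast at this ⊢
    omega
  have hDtB : ∀ (j : Fin d → Fin k), ∀ y ∈ D, y + t j ∈ B := by
    intro j y hy
    rw [mem_boxF]
    intro i
    have h := ht1 j y hy i
    have hji : ((j i : ℕ) : ℤ) + 1 ≤ k := by exact_mod_cast (j i).isLt
    have h0 : (0:ℤ) ≤ (w:ℤ) * ((j i : ℕ) : ℤ) := by positivity
    have h2 : (w:ℤ) * (((j i : ℕ) : ℤ) + 1) ≤ (w:ℤ) * k :=
      mul_le_mul_of_nonneg_left hji (by positivity)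
    have h3 : y i + t j i < (w:ℤ) * k := by nlinarith [h.2, h2]
    have hkw : ((k*w : ℕ) : ℤ) = (w:ℤ) * (k:ℤ) := by push_cast; ring
    constructor
    · simpa using le_trans h0 h.1
    · simp only [Pi.add_apply]
      rw [hkw]
      linarith [h3]
  have hNB : ∀ x ∈ B, ∀ i : Fin m, x + N i ∈ Bp := by
    intro x hx i
    rw [mem_boxF] at hx ⊢
    intro i'
    have h1 := hx i'
    have h2 := hr' i i'
    simp only [Pi.add_apply]
    push_cast at h1 ⊢
    omega
  -- key: normalization does not change the image
  have hHnm : ∀ z : (Fin d → ℤ) → S, H (nm D t c e z) = H z := by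
    intro z
    funext x
    rw [hH]
    show θ x (fun i' => nm D t c e z (x + N i')) = θ x (fun i' => z (x + N i'))
    by_cases hcase : ∃ (i : Fin m) (j : Fin d → Fin k), x + N i - t j ∈ Δ
    · obtain ⟨i, j, hij⟩ := hcase
      have hijD : (x - t j) + N i ∈ Δ := by
        rw [show (x - t j) + N i = x + N i - t j from by abel]; exact hij
      have hallD : ∀ i' : Fin m, x + N i' - t j ∈ D := by
        intro i'
        have h := hD1 (x - t j) i i' hijD
        rwa [show (x - t j) + N i' = x + N i' - t j from by abel] at h
      have hxD : x - t j ∈ D := hD2 (x - t j) i hijD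
      have hθ : θ x = θ (x - t j) := by
        have h := ht2 j (x - t j) hxD
        rwa [show x - t j + t j = x from by abel] at h
      by_cases hm : ∀ y ∈ D, z (y + t j) = c y
      · have hzv : ∀ i' : Fin m, z (x + N i') = c (x - t j + N i') := by
          intro i'
          have h := hm (x - t j + N i') (by
            rw [show (x - t j) + N i' = x + N i' - t j from by abel]; exact hallD i')
          rwa [show (x - t j + N i') + t j = x + N i' from by abel] at h
        have hnmv : ∀ i' : Fin m, nm D t c e z (x + N i') = e (x - t j + N i') := by
          intro i'
          have h := nm_matched (e := e) huniq hm (hallD i')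
          rwa [show (x + N i' - t j) + t j = x + N i' from by abel,
               show x + N i' - t j = x - t j + N i' from by abel] at h
        calc θ x (fun i' => nm D t c e z (x + N i'))
            = θ (x - t j) (fun i' => e ((x - t j) + N i')) := by
              rw [hθ]; congr 1; funext i'; rw [hnmv i']
          _ = H e (x - t j) := by rw [hH]
          _ = H c (x - t j) := by rw [hce]
          _ = θ (x - t j) (fun i' => c ((x - t j) + N i')) := by rw [hH]
          _ = θ x (fun i' => z (x + N i')) := by
              rw [← hθ]; congr 1; funext i'; rw [hzv i']
      · congr 1
        funext i'
        exact nm_unmatched huniq hm (hallD i')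
    · push_neg at hcase
      congr 1
      funext i'
      exact nm_outside hΔD hoff (fun j => hcase i' j)
  -- the disjoint copies inside the big box
  set U := Finset.univ.biUnion (fun j : Fin d → Fin k => D.image (fun y => y + t j)) with hUdef
  have hUBp : U ⊆ Bp := by
    intro x hx
    rw [hUdef, Finset.mem_biUnion] at hx
    obtain ⟨j, -, hx⟩ := hx
    obtain ⟨y, hy, rfl⟩ := Finset.mem_image.mp hx
    exact hBBp (hDtB j y hy)
  have hdisjU : ∀ j ∈ (Finset.univ : Finset (Fin d → Fin k)), ∀ j' ∈ Finset.univ, j ≠ j' →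
      Disjoint (D.image (fun y => y + t j)) (D.image (fun y => y + t j')) := by
    intro j _ j' _ hjj
    rw [Finset.disjoint_left]
    intro v hv hv'
    obtain ⟨y, hy, rfl⟩ := Finset.mem_image.mp hv
    obtain ⟨y', hy', he'⟩ := Finset.mem_image.mp hv'
    apply hjj
    apply huniq j j' (y + t j)
    · simpa using hy
    · rw [show y + t j - t j' = y' from by rw [← he']; abel]
      exact hy'
  have hUcard : U.card = k^d * c0 := by
    rw [hUdef, Finset.card_biUnion hdisjU]
    have h1 : ∀ j ∈ (Finset.univ : Finset (Fin d → Fin k)),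
        (D.image (fun y => y + t j)).card = c0 := by
      intro j _
      exact Finset.card_image_of_injective _ fun a b hab => by simpa using hab
    rw [Finset.sum_congr rfl h1, Finset.sum_const, Finset.card_univ, smul_eq_mul]
    congr 1
    simp [Fintype.card_fun]
  set Rest := Bp \ U with hRdef
  have hRcard : Rest.card = (k*w + 2*r')^d - k^d * c0 := by
    rw [hRdef, Finset.card_sdiff_of_subset hUBp, hUcard, hBpdef, card_boxF]
  -- extended configurations and preimages
  set vhat : ({ x // x ∈ B } → S) → (Fin d → ℤ) → S :=
    fun v x => if h : x ∈ B then v ⟨x, h⟩ else Classical.arbitrary S with hvhatdef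
  choose Z hZ using fun v : { x // x ∈ B } → S => hs (vhat v)
  set ζ : ({ x // x ∈ B } → S) → (Fin d → ℤ) → S := fun v => nm D t c e (Z v) with hζdef
  have hζH : ∀ v, H (ζ v) = vhat v := fun v => (hHnm (Z v)).trans (hZ v)
  have hrange : ∀ v (j : Fin d → Fin k), ∃ y ∈ D, ζ v (y + t j) ≠ c y := by
    intro v j
    by_cases hm : ∀ y ∈ D, Z v (y + t j) = c y
    · refine ⟨δ0, hΔD hδ0, ?_⟩
      have hv : ζ v (δ0 + t j) = e δ0 := nm_matched huniq hm (hΔD hδ0)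
      rw [hv]
      exact fun h => hδ0' h.symm
    · have hm2 := hm
      push_neg at hm2
      obtain ⟨y, hy, hzy⟩ := hm2
      refine ⟨y, hy, ?_⟩
      have hv : ζ v (y + t j) = Z v (y + t j) :=
        nm_unmatched huniq hm (by simpa using hy)
      rw [hv]
      exact hzy
  -- the injection
  set pc : { x // x ∈ D } → S := fun y => c y.1 with hpcdef
  set F : ({ x // x ∈ B } → S) →
      ((Fin d → Fin k) → { g : { x // x ∈ D } → S // g ≠ pc }) × ({ x // x ∈ Rest } → S) :=
    fun v => (fun j => ⟨fun y => ζ v (y.1 + t j), by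
        intro hgl
        obtain ⟨y, hy, hne2⟩ := hrange v j
        exact hne2 (congrFun hgl ⟨y, hy⟩)⟩,
      fun x => ζ v x.1) with hFdef
  have hFinj : Function.Injective F := by
    intro v1 v2 hF
    have hζeq : ∀ x ∈ Bp, ζ v1 x = ζ v2 x := by
      intro x hx
      by_cases hU : x ∈ U
      · rw [hUdef, Finset.mem_biUnion] at hU
        obtain ⟨j, -, hU⟩ := hU
        obtain ⟨y, hy, rfl⟩ := Finset.mem_image.mp hU
        have h := congrArg (fun G => (G.1 j).1 ⟨y, hy⟩) hF
        simpa [hFdef] using h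
      · have hxR : x ∈ Rest := Finset.mem_sdiff.mpr ⟨hx, hU⟩
        have h := congrArg (fun G => G.2 ⟨x, hxR⟩) hF
        simpa [hFdef] using h
    funext xx
    obtain ⟨x, hx⟩ := xx
    have e1 : ∀ v : { x // x ∈ B } → S, v ⟨x, hx⟩ = θ x (fun i => ζ v (x + N i)) := by
      intro v
      have h := congrFun (hζH v) x
      rw [hH] at h
      have h2 : vhat v x = v ⟨x, hx⟩ := dif_pos hx
      rw [h2] at h
      exact h.symm
    rw [e1 v1, e1 v2]
    congr 1
    funext i
    exact hζeq _ (hNB x hx i)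
  -- cardinalities
  have hc1 : Fintype.card ({ x // x ∈ B } → S) = s ^ ((k*w)^d) := by
    rw [Fintype.card_fun, Fintype.card_coe, hBdef, card_boxF]
  have hc2 : Fintype.card { g : { x // x ∈ D } → S // g ≠ pc } = A - 1 := by
    have h1 : Fintype.card { g : { x // x ∈ D } → S // g = pc } = 1 :=
      Fintype.card_subtype_eq pc
    have h2 : Fintype.card { g : { x // x ∈ D } → S // g ≠ pc }
        = Fintype.card ({ x // x ∈ D } → S) - 1 := by
      rw [Fintype.card_subtype_compl, h1]
    rw [h2, Fintype.card_fun, Fintype.card_coe, hAdef, hc0def]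
  have hc3a : Fintype.card ((Fin d → Fin k) → { g : { x // x ∈ D } → S // g ≠ pc })
      = (A-1)^(k^d) := by
    rw [Fintype.card_fun, hc2]
    congr 1
    simp [Fintype.card_fun]
  have hc3b : Fintype.card ({ x // x ∈ Rest } → S) = s^((k*w+2*r')^d - k^d*c0) := by
    rw [Fintype.card_fun, Fintype.card_coe, hRcard]
  have hc3 : Fintype.card (((Fin d → Fin k) → { g : { x // x ∈ D } → S // g ≠ pc })
      × ({ x // x ∈ Rest } → S)) = (A-1)^(k^d) * s^((k*w+2*r')^d - k^d*c0) := by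
    rw [Fintype.card_prod, hc3a, hc3b]
  have hcard : s ^ ((k*w)^d) ≤ (A-1)^(k^d) * s^((k*w+2*r')^d - k^d*c0) := by
    rw [← hc1, ← hc3]
    exact Fintype.card_le_of_injective F hFinj
  -- final arithmetic contradiction
  have hbp : k^d*c0 ≤ (k*w+2*r')^d := by
    calc k^d*c0 = U.card := hUcard.symm
      _ ≤ Bp.card := Finset.card_le_card hUBp
      _ = (k*w+2*r')^d := by rw [hBpdef, card_boxF]
  have hbb : (k*w)^d ≤ (k*w+2*r')^d := Nat.pow_le_pow_left (by omega) d
  set E := (k*w+2*r')^d - (k*w)^d with hEdef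
  have hEeq : (k*w+2*r')^d = (k*w)^d + E := by omega
  have h1 : s^((k*w)^d) * s^(k^d*c0) ≤ (A-1)^(k^d) * s^((k*w+2*r')^d) := by
    calc s^((k*w)^d) * s^(k^d*c0)
        ≤ ((A-1)^(k^d) * s^((k*w+2*r')^d - k^d*c0)) * s^(k^d*c0) :=
          Nat.mul_le_mul_right _ hcard
      _ = (A-1)^(k^d) * s^(((k*w+2*r')^d - k^d*c0) + k^d*c0) := by rw [mul_assoc, pow_add]
      _ = _ := by rw [Nat.sub_add_cancel hbp]
  have h2 : A^(k^d) ≤ (A-1)^(k^d) * s^E := by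
    have hpos : 0 < s^((k*w)^d) := pow_pos (by omega) _
    apply Nat.le_of_mul_le_mul_left ?_ hpos
    calc s^((k*w)^d) * A^(k^d) = s^((k*w)^d) * s^(k^d*c0) := by
          rw [hAdef, ← pow_mul, Nat.mul_comm c0 (k^d)]
      _ ≤ (A-1)^(k^d) * s^((k*w+2*r')^d) := h1
      _ = (A-1)^(k^d) * (s^((k*w)^d) * s^E) := by rw [hEeq, pow_add]
      _ = s^((k*w)^d) * ((A-1)^(k^d) * s^E) := by ring
  have hE1 : E ≤ C1 * k^(d-1) := by
    obtain ⟨d0, hd0⟩ : ∃ d0, d = d0 + 1 := ⟨d-1, by omega⟩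
    have hb := aux_boundary (k*w) (2*r') d0
    have hk2 : k*w + 2*r' ≤ k*(w+2*r') := by
      have h5 : 2*r' ≤ k*(2*r') := Nat.le_mul_of_pos_left _ (by omega)
      calc k*w + 2*r' ≤ k*w + k*(2*r') := by omega
        _ = k*(w+2*r') := by ring
    have hmono : (k*w+2*r')^d0 ≤ (k*(w+2*r'))^d0 := Nat.pow_le_pow_left hk2 d0
    have hmp : (k*(w+2*r'))^d0 = (w+2*r')^d0 * k^d0 := by rw [mul_pow]; ring
    have hE2 : E ≤ (d0+1)*(2*r')*(k*w+2*r')^d0 := by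
      rw [hEdef, hd0]; omega
    calc E ≤ (d0+1)*(2*r')*(k*w+2*r')^d0 := hE2
      _ ≤ (d0+1)*(2*r')*((w+2*r')^d0 * k^d0) := by
          apply Nat.mul_le_mul_left
          rw [← hmp]; exact hmono
      _ = C1 * k^(d-1) := by rw [hC1def, hd0]; simp only [Nat.add_sub_cancel]; ring
  have hkpow : 1 ≤ k^(d-1) := Nat.one_le_pow _ _ (by omega)
  have hq : s*E + 1 ≤ k^d / (A-1) := by
    rw [Nat.le_div_iff_mul_le (by omega : 0 < A-1)]
    have h3 : s*E + 1 ≤ (s*C1+1) * k^(d-1) := by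
      have h4 : s*E ≤ s*C1*k^(d-1) := by
        calc s*E ≤ s*(C1*k^(d-1)) := Nat.mul_le_mul_left _ hE1
          _ = s*C1*k^(d-1) := by ring
      nlinarith [hkpow]
    calc (s*E+1)*(A-1) ≤ ((s*C1+1) * k^(d-1)) * (A-1) := Nat.mul_le_mul_right _ h3
      _ = ((A-1)*(s*C1+1)) * k^(d-1) := by ring
      _ ≤ k * k^(d-1) := Nat.mul_le_mul_right _ (by omega)
      _ = k^(d-1+1) := by rw [pow_succ]; ring
      _ = k^d := by congr 1; omega
  have hfin1 : (A-1)^(k^d) * s^E < A^(k^d) := by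
    have hsE : s^E < 2^(k^d/(A-1)) := by
      calc s^E ≤ (2^s)^E := Nat.pow_le_pow_left (Nat.lt_two_pow_self (n := s)).le E
        _ = 2^(s*E) := by rw [← pow_mul]
        _ < 2^(s*E+1) := Nat.pow_lt_pow_right (by omega) (by omega)
        _ ≤ 2^(k^d/(A-1)) := Nat.pow_le_pow_right (by omega) hq
    calc (A-1)^(k^d) * s^E < (A-1)^(k^d) * 2^(k^d/(A-1)) :=
        mul_lt_mul_of_pos_left hsE (pow_pos (by omega) _)
      _ ≤ A^(k^d) := aux_pow_div A (k^d) hA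
  exact absurd h2 (Nat.not_le.mpr hfin1)
end

section
/- Let θ ∈ R^{ℤ^d} be a uniformly recurrent rule distribution. Then the global update rule H_θ is surjective if and only if it is pre-injective (Garden of Eden theorem for uniformly recurrent NUCA). -/
namespace GoEAux

/-! ### Numeric lemmas -/

lemma pow_succ_lower (x n : ℕ) : x ^ (n+1) + (n+1) * x ^ n ≤ (x+1) ^ (n+1) := by
  induction n with
  | zero => simp
  | succ n ih =>
    calc x ^ (n+2) + (n+2) * x ^ (n+1)
        ≤ x ^ (n+2) + (n+2) * x ^ (n+1) + (n+1) * x ^ n := Nat.le_add_right _ _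
      _ = (x+1) * (x ^ (n+1) + (n+1) * x ^ n) := by ring
      _ ≤ (x+1) * (x+1) ^ (n+1) := Nat.mul_le_mul_left _ ih
      _ = (x+1) ^ (n+2) := by ring

lemma exists_pow_beats (A M : ℕ) (hA : 2 ≤ A) :
    ∃ n : ℕ, 0 < n ∧ (A - 1) ^ n * M < A ^ n := by
  set x := A - 1 with hx
  have hx1 : 1 ≤ x := by omega
  have hAx : A = x + 1 := by omega
  refine ⟨M * x + 1, Nat.succ_pos _, ?_⟩
  have hlow := pow_succ_lower x (M * x)
  have hxp : 0 < x ^ (M * x) := Nat.pow_pos (by omega)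
  have key : x ^ (M * x + 1) * M < x ^ (M * x + 1) + (M * x + 1) * x ^ (M * x) := by
    have h1 : x ^ (M * x + 1) * M = (M * x) * x ^ (M * x) := by ring
    have h2 : (M * x) * x ^ (M * x) < (M * x + 1) * x ^ (M * x) :=
      Nat.mul_lt_mul_of_lt_of_le (Nat.lt_succ_self _) (le_refl _) hxp
    omega
  rw [hAx]
  omega

lemma master (d q A C : ℕ) (hd : 0 < d) (hq : 1 ≤ q) (hA : 2 ≤ A) :
    ∃ n : ℕ, 0 < n ∧ (A - 1) ^ (n ^ d) * q ^ (C * n ^ (d-1)) < A ^ (n ^ d) := by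
  obtain ⟨n, hn, hbase⟩ := exists_pow_beats A (q ^ C) hA
  refine ⟨n, hn, ?_⟩
  have hd' : d - 1 + 1 = d := Nat.succ_pred_eq_of_pos hd
  have hnd : n ^ d = n * n ^ (d - 1) := by
    conv_lhs => rw [← hd']
    rw [pow_succ]; ring
  have hpos : n ^ (d-1) ≠ 0 := by positivity
  calc (A - 1) ^ (n ^ d) * q ^ (C * n ^ (d-1))
      = ((A-1) ^ n * q ^ C) ^ (n ^ (d-1)) := by
        rw [mul_pow, hnd, pow_mul, ← pow_mul q]
    _ < (A ^ n) ^ (n ^ (d-1)) := Nat.pow_lt_pow_left hbase hpos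
    _ = A ^ (n ^ d) := by rw [← pow_mul, ← hnd]

lemma pow_add_le' (x c n : ℕ) : (x + c) ^ (n+1) ≤ x ^ (n+1) + (n+1) * c * (x + c) ^ n := by
  induction n with
  | zero => simp
  | succ n ih =>
    calc (x + c) ^ (n+2) = (x + c) * (x + c) ^ (n+1) := by ring
      _ ≤ (x + c) * (x ^ (n+1) + (n+1) * c * (x + c) ^ n) := Nat.mul_le_mul_left _ ih
      _ = x ^ (n+2) + (c * x ^ (n+1) + (n+1) * c * (x+c) ^ (n+1)) := by ring
      _ ≤ x ^ (n+2) + (c * (x+c) ^ (n+1) + (n+1) * c * (x+c) ^ (n+1)) := by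
          have h3 : x ^ (n+1) ≤ (x + c) ^ (n+1) := Nat.pow_le_pow_left (by omega) _
          have h4 := Nat.mul_le_mul_left c h3
          omega
      _ = x ^ (n+2) + (n+2) * c * (x+c) ^ (n+1) := by ring

lemma boundary_le {d : ℕ} (n x c g : ℕ) (hd : 0 < d) (hxg : x + c ≤ g * n) :
    (x + c) ^ d ≤ x ^ d + (d * c * g ^ (d-1)) * n ^ (d-1) := by
  obtain ⟨d', rfl⟩ : ∃ d', d = d' + 1 := ⟨d - 1, by omega⟩
  have h1 := pow_add_le' x c d'
  have h2 : (x + c) ^ d' ≤ (g * n) ^ d' := Nat.pow_le_pow_left hxg _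
  have h3 : (g * n) ^ d' = g ^ d' * n ^ d' := mul_pow _ _ _
  simp only [Nat.add_sub_cancel]
  calc (x+c) ^ (d'+1) ≤ x ^ (d'+1) + (d'+1) * c * (x+c) ^ d' := h1
    _ ≤ x ^ (d'+1) + (d'+1) * c * (g ^ d' * n ^ d') := by
        refine Nat.add_le_add_left (Nat.mul_le_mul_left _ ?_) _
        rw [← h3]; exact h2
    _ = x ^ (d'+1) + ((d'+1) * c * g ^ d') * n ^ d' := by ring

lemma count_lt {q X A CN Sc E W : ℕ} (hq : 1 ≤ q)
    (hmaster : X * q ^ CN < A) (hA : A = q ^ Sc) (hSW : Sc ≤ W) (hEW : E ≤ W + CN) :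
    X * q ^ (E - Sc) < q ^ W := by
  have h0 : 0 < q ^ (W - Sc) := Nat.pow_pos hq
  have h1 : E - Sc ≤ (W - Sc) + CN := by omega
  calc X * q ^ (E - Sc) ≤ X * q ^ ((W - Sc) + CN) :=
        Nat.mul_le_mul_left _ (Nat.pow_le_pow_right hq h1)
    _ = (X * q ^ CN) * q ^ (W - Sc) := by rw [pow_add]; ring
    _ < A * q ^ (W - Sc) := Nat.mul_lt_mul_of_lt_of_le hmaster (le_refl _) h0
    _ = q ^ W := by rw [hA, ← pow_add]; congr 1; omega

/-! ### Cubes -/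

variable {d : ℕ}

noncomputable def cube (b : Fin d → ℤ) (k : ℕ) : Finset (Fin d → ℤ) :=
  Fintype.piFinset fun i => Finset.Ico (b i) (b i + k)

lemma mem_cube {b x : Fin d → ℤ} {k : ℕ} :
    x ∈ cube b k ↔ ∀ i, b i ≤ x i ∧ x i < b i + k := by
  simp [cube, Fintype.mem_piFinset, Finset.mem_Ico, forall_and]

lemma card_cube (b : Fin d → ℤ) (k : ℕ) : (cube b k).card = k ^ d := by
  rw [cube, Fintype.card_piFinset]
  simp [Int.card_Ico]

lemma mem_cube_translate {b t z : Fin d → ℤ} {k : ℕ} :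
    z ∈ cube (fun i => b i + t i) k ↔ z - t ∈ cube b k := by
  simp only [mem_cube, Pi.sub_apply]
  constructor <;> intro h i <;> have := h i <;> omega

lemma block_disjoint {w : ℕ} (hw : 0 < w) {a a' : Fin d → ℤ} (h : a ≠ a') :
    Disjoint (cube (fun i => (w:ℤ) * a i) w) (cube (fun i => (w:ℤ) * a' i) w) := by
  rw [Finset.disjoint_left]
  intro x hx hx'
  apply h
  funext i
  have h1 := mem_cube.mp hx i
  have h2 := mem_cube.mp hx' i
  by_contra hne2
  rcases lt_or_gt_of_ne hne2 with hlt | hlt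
  · have h3 : (w:ℤ) * (a i + 1) ≤ (w:ℤ) * a' i :=
      mul_le_mul_of_nonneg_left (by omega) (by positivity)
    have h4 : (w:ℤ) * (a i + 1) = w * a i + w := by ring
    linarith
  · have h3 : (w:ℤ) * (a' i + 1) ≤ (w:ℤ) * a i :=
      mul_le_mul_of_nonneg_left (by omega) (by positivity)
    have h4 : (w:ℤ) * (a' i + 1) = w * a' i + w := by ring
    linarith

lemma block_in_window {w n : ℕ} {a : Fin d → ℤ} (ha : a ∈ cube 0 n) :
    cube (fun i => (w:ℤ) * a i) w ⊆ cube (0 : Fin d → ℤ) (n * w) := by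
  intro z hz
  rw [mem_cube]
  intro i
  have h1 := mem_cube.mp hz i
  have h2 := mem_cube.mp ha i
  simp only [Pi.zero_apply] at h2 ⊢
  have ha0 : 0 ≤ a i := by omega
  have ha1 : a i + 1 ≤ n := by omega
  have h3 : (0:ℤ) ≤ (w:ℤ) * a i := mul_nonneg (by positivity) ha0
  have h4 : (w:ℤ) * (a i + 1) ≤ (w:ℤ) * n := mul_le_mul_of_nonneg_left (by omega) (by positivity)
  have h5 : (w:ℤ) * (a i + 1) = w * a i + w := by ring
  push_cast
  constructor
  · omega
  · have h6 : (w:ℤ) * n = n * w := by ring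
    omega

/-! ### Counting lemma -/

open scoped Classical in
lemma card_avoid {α S ι : Type} [DecidableEq α] [Fintype S] [Fintype ι] [DecidableEq ι]
    (F : Finset α) (T : ι → Finset α) (hsub : ∀ a, T a ⊆ F)
    (hdis : ∀ a b, a ≠ b → Disjoint (T a) (T b)) (p : ι → α → S) :
    Fintype.card {f : {x // x ∈ F} → S //
        ∀ a : ι, ∃ x, ∃ hx : x ∈ T a, f ⟨x, hsub a hx⟩ ≠ p a x}
      ≤ (∏ a : ι, (Fintype.card S ^ (T a).card - 1)) *
          Fintype.card S ^ (F.card - ∑ a : ι, (T a).card) := by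
  classical
  set U : Finset α := Finset.univ.biUnion T with hU
  have hUF : U ⊆ F := by
    intro x hx
    obtain ⟨a, -, hxa⟩ := Finset.mem_biUnion.mp hx
    exact hsub a hxa
  have hUcard : U.card = ∑ a : ι, (T a).card := by
    rw [hU, Finset.card_biUnion (fun a _ b _ hab => hdis a b hab)]
  set R : Finset α := F \ U with hR
  have hRcard : R.card = F.card - ∑ a : ι, (T a).card := by
    rw [hR, Finset.card_sdiff_of_subset hUF, hUcard]
  let Φ : {f : {x // x ∈ F} → S //
        ∀ a : ι, ∃ x, ∃ hx : x ∈ T a, f ⟨x, hsub a hx⟩ ≠ p a x} →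
      ((a : ι) → {g : {x // x ∈ T a} → S // g ≠ fun x => p a x.1}) × ({x // x ∈ R} → S) :=
    fun f => ⟨fun a => ⟨fun x => f.1 ⟨x.1, hsub a x.2⟩, by
        obtain ⟨x, hx, hne⟩ := f.2 a
        intro hgeq
        exact hne (by simpa using congrFun hgeq ⟨x, hx⟩)⟩,
      fun x => f.1 ⟨x.1, (Finset.mem_sdiff.mp x.2).1⟩⟩
  have hinj : Function.Injective Φ := by
    intro f g h
    have h1 := congrArg Prod.fst h
    have h2 := congrArg Prod.snd h
    ext ⟨x, hxF⟩
    by_cases hx : x ∈ U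
    · obtain ⟨a, -, hxa⟩ := Finset.mem_biUnion.mp hx
      have := congrFun (congrArg Subtype.val (congrFun h1 a)) ⟨x, hxa⟩
      simpa using this
    · have hxR : x ∈ R := Finset.mem_sdiff.mpr ⟨hxF, hx⟩
      have := congrFun h2 ⟨x, hxR⟩
      simpa using this
  have hcard := Fintype.card_le_of_injective Φ hinj
  refine le_trans hcard ?_
  rw [Fintype.card_prod, Fintype.card_pi]
  have h1 : ∀ a : ι, Fintype.card {g : {x // x ∈ T a} → S // g ≠ fun x => p a x.1}
      = Fintype.card S ^ (T a).card - 1 := by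
    intro a
    have := Fintype.card_subtype_compl (fun g : {x // x ∈ T a} → S => g = fun x => p a x.1)
    simp only [Fintype.card_subtype_eq] at this
    rw [this, Fintype.card_fun, Fintype.card_coe]
  have h2 : Fintype.card ({x // x ∈ R} → S)
      = Fintype.card S ^ (F.card - ∑ a : ι, (T a).card) := by
    rw [Fintype.card_fun, Fintype.card_coe, hRcard]
  rw [h2]
  exact Nat.mul_le_mul_right _ (le_of_eq (Finset.prod_congr rfl fun a _ => h1 a))

/-! ### Tiles from uniform recurrence -/

lemma exists_tiles {R : Type} (θ : (Fin d → ℤ) → R) (hrec : UniformlyRecurrent θ)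
    (bD : Fin d → ℤ) (K : ℕ) :
    ∃ w : ℕ, 0 < w ∧ ∃ t : (Fin d → ℤ) → (Fin d → ℤ),
      ∀ a : Fin d → ℤ,
        (∀ x ∈ cube bD K, ∀ i, (w:ℤ) * a i ≤ x i + t a i ∧ x i + t a i < (w:ℤ) * a i + w) ∧
        (∀ x ∈ cube bD K, θ (x + t a) = θ x) := by
  obtain ⟨w, hw, hA⟩ := hrec (cube bD K)
  exact ⟨w, hw, fun a => (hA fun i => (w:ℤ) * a i).choose,
    fun a => (hA fun i => (w:ℤ) * a i).choose_spec⟩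

lemma cube_side_le {bD : Fin d → ℤ} {K w : ℕ} (hd : 0 < d) (hK : 1 ≤ K) {aa t0 : Fin d → ℤ}
    (hb : ∀ x ∈ cube bD K, ∀ i, aa i ≤ x i + t0 i ∧ x i + t0 i < aa i + (w:ℤ)) : K ≤ w := by
  have hK' : (1:ℤ) ≤ (K:ℤ) := by exact_mod_cast hK
  set i0 : Fin d := ⟨0, hd⟩
  have h1 : bD ∈ cube bD K := mem_cube.mpr (fun i => by constructor <;> omega)
  have h2 : (fun i => bD i + ((K:ℤ) - 1)) ∈ cube bD K :=
    mem_cube.mpr (fun i => by constructor <;> omega)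
  have e1 := (hb _ h1) i0
  have e2 := (hb _ h2) i0
  have : (K:ℤ) ≤ (w:ℤ) := by omega
  exact_mod_cast this


/-! ### Moore direction: failure of pre-injectivity implies failure of surjectivity -/

lemma moore {S : Type} [Fintype S] [Nonempty S] {d m : ℕ} (hd : 0 < d)
    (hq2 : 2 ≤ Fintype.card S)
    (N : Fin m → (Fin d → ℤ)) (θ : (Fin d → ℤ) → ((Fin m → S) → S))
    (hrec : UniformlyRecurrent θ)
    (c e : (Fin d → ℤ) → S) (hfin : {x | c x ≠ e x}.Finite) (hne : c ≠ e)
    (hce : (fun (x : Fin d → ℤ) => θ x fun i => c (x + N i))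
         = (fun (x : Fin d → ℤ) => θ x fun i => e (x + N i))) :
    ¬ Function.Surjective
        (fun (u : (Fin d → ℤ) → S) (x : Fin d → ℤ) => θ x (fun i => u (x + N i))) := by
  classical
  intro hsur
  set q := Fintype.card S with hqdef
  have hq1 : 1 ≤ q := by omega
  -- neighbourhood radius
  obtain ⟨r, hNr⟩ : ∃ r : ℕ, ∀ j i, (N j i).natAbs ≤ r := by
    refine ⟨Finset.univ.sup fun j : Fin m => Finset.univ.sup fun i : Fin d => (N j i).natAbs,
      fun j i => ?_⟩
    exact le_trans (Finset.le_sup (f := fun i : Fin d => (N j i).natAbs) (Finset.mem_univ i))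
      (Finset.le_sup (f := fun j : Fin m => Finset.univ.sup fun i : Fin d => (N j i).natAbs)
        (Finset.mem_univ j))
  have hNji : ∀ j i, -(r:ℤ) ≤ N j i ∧ N j i ≤ (r:ℤ) := by
    intro j i; have := hNr j i; omega
  -- difference cube
  obtain ⟨δ₀, hδ₀⟩ := Function.ne_iff.mp hne
  obtain ⟨ρ, hρ⟩ : ∃ ρ : ℕ, ∀ x : Fin d → ℤ, c x ≠ e x → ∀ i, (x i).natAbs ≤ ρ := by
    refine ⟨hfin.toFinset.sup (fun x => Finset.univ.sup fun i => (x i).natAbs), ?_⟩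
    intro x hx i
    have hx' : x ∈ hfin.toFinset := hfin.mem_toFinset.mpr hx
    exact le_trans (Finset.le_sup (f := fun i : Fin d => (x i).natAbs) (Finset.mem_univ i))
      (Finset.le_sup (f := fun x : Fin d → ℤ => Finset.univ.sup fun i : Fin d => (x i).natAbs) hx')
  set b : Fin d → ℤ := fun _ => -(ρ:ℤ) with hbdef
  set k : ℕ := 2*ρ+1 with hkdef
  have hk : 1 ≤ k := by omega
  have hΔQ : ∀ x : Fin d → ℤ, c x ≠ e x → x ∈ cube b k := by
    intro x hx
    rw [mem_cube]; intro i
    have h1 : (x i).natAbs ≤ ρ := hρ x hx i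
    simp only [hbdef]
    push_cast
    omega
  have hδ₀Q := hΔQ δ₀ hδ₀
  set K : ℕ := k + 4*r with hKdef
  set bD : Fin d → ℤ := fun i => b i - (2*r:ℕ) with hbDdef
  have hQD : cube b k ⊆ cube bD K := by
    intro x hx; rw [mem_cube] at hx ⊢; intro i; have := hx i
    simp only [hbDdef]; push_cast; omega
  obtain ⟨w, hw, t, ht⟩ := exists_tiles θ hrec bD K
  have hKw : K ≤ w := cube_side_le hd (by omega) (ht 0).1
  -- master inequality
  set A : ℕ := q ^ (K ^ d) with hAdef
  set C : ℕ := d * (2*r) * (w + 2*r)^(d-1) with hCdef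
  have hA2 : 2 ≤ A := le_trans hq2 (Nat.le_self_pow (by positivity) q)
  obtain ⟨n, hn, hmaster⟩ := master d q A C hd hq1 hA2
  set L : ℕ := n * w with hLdef
  set idx : Finset (Fin d → ℤ) := cube (0 : Fin d → ℤ) n with hidxdef
  set E : Finset (Fin d → ℤ) := cube (fun _ => -((r:ℕ):ℤ)) (L + 2*r) with hEdef
  set Wn : Finset (Fin d → ℤ) := cube (0 : Fin d → ℤ) L with hWdef
  set T : (Fin d → ℤ) → Finset (Fin d → ℤ) := fun a => cube (fun i => bD i + t a i) K with hTdef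
  have hTD : ∀ a z, z ∈ T a ↔ z - t a ∈ cube bD K := fun a z => mem_cube_translate
  have hblockmem : ∀ a z, z - t a ∈ cube bD K → z ∈ cube (fun i => (w:ℤ) * a i) w := by
    intro a z hz
    rw [mem_cube]; intro i
    have h1 := ((ht a).1 _ hz) i
    simp only [Pi.sub_apply] at h1
    omega
  have hTBlock : ∀ a, T a ⊆ cube (fun i => (w:ℤ) * a i) w :=
    fun a z hz => hblockmem a z ((hTD a z).mp hz)
  have hTW : ∀ a ∈ idx, T a ⊆ Wn := by
    intro a ha z hz
    rw [hWdef, hLdef]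
    exact block_in_window ha (hTBlock a hz)
  have hWE : Wn ⊆ E := by
    intro z hz; rw [hWdef, mem_cube] at hz; rw [hEdef, mem_cube]; intro i
    have := hz i
    simp only [Pi.zero_apply] at this
    push_cast
    omega
  have hTE : ∀ a ∈ idx, T a ⊆ E := fun a ha => (hTW a ha).trans hWE
  have hTdis : ∀ a a', a ≠ a' → Disjoint (T a) (T a') := by
    intro a a' hne'
    exact (block_disjoint hw hne').mono (hTBlock a) (hTBlock a')
  have huniq : ∀ a a' z, z - t a ∈ cube bD K → z - t a' ∈ cube bD K → a = a' := by
    intro a a' z h1 h2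
    by_contra hne'
    exact Finset.disjoint_left.mp (block_disjoint hw hne')
      (hblockmem a z h1) (hblockmem a' z h2)
  have hEcard : E.card = (L + 2*r)^d := by rw [hEdef]; exact card_cube _ _
  have hWcard : Wn.card = L^d := by rw [hWdef]; exact card_cube _ _
  have hTcard : ∀ a, (T a).card = K^d := fun a => by rw [hTdef]; exact card_cube _ _
  set s₀ : S := Classical.arbitrary S with hs₀
  obtain ⟨extE, hextE⟩ : ∃ extE : ({x // x ∈ E} → S) → (Fin d → ℤ) → S,
      ∀ g z, extE g z = if h : z ∈ E then g ⟨z, h⟩ else s₀ := ⟨_, fun _ _ => rfl⟩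
  -- normalization
  have key : ∀ u : (Fin d → ℤ) → S, ∃ u' : (Fin d → ℤ) → S,
      (∀ a ∈ idx, ∃ zp, (zp - t a ∈ cube bD K) ∧ u' zp ≠ c (zp - t a)) ∧
      (∀ y, θ y (fun j => u' (y + N j)) = θ y (fun j => u (y + N j))) := by
    intro u
    let P : (Fin d → ℤ) → (Fin d → ℤ) → Prop :=
      fun a z => z - t a ∈ cube b k ∧ (∀ x ∈ cube bD K, u (x + t a) = c x)
    obtain ⟨u', hu'def⟩ : ∃ u' : (Fin d → ℤ) → S,
        ∀ z, u' z = if h : ∃ a, P a z then e (z - t h.choose) else u z := ⟨_, fun _ => rfl⟩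
    have hn1 : ∀ a z, P a z → u' z = e (z - t a) := by
      intro a z hP
      have hex : ∃ a, P a z := ⟨a, hP⟩
      have hchoose : hex.choose = a :=
        huniq hex.choose a z (hQD hex.choose_spec.1) (hQD hP.1)
      rw [hu'def, dif_pos hex, hchoose]
    have hn2 : ∀ z, ¬ (∃ a, P a z) → u' z = u z := by
      intro z h; rw [hu'def, dif_neg h]
    refine ⟨u', ?_, ?_⟩
    · -- reducedness
      intro a ha
      by_cases hM : ∀ x ∈ cube bD K, u (x + t a) = c x
      · refine ⟨δ₀ + t a, by rw [add_sub_cancel_right]; exact hQD hδ₀Q, ?_⟩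
        have hP : P a (δ₀ + t a) := ⟨by rw [add_sub_cancel_right]; exact hδ₀Q, hM⟩
        rw [hn1 a _ hP, add_sub_cancel_right]
        exact fun hh => hδ₀ hh.symm
      · push_neg at hM
        obtain ⟨x, hxD, hux⟩ := hM
        refine ⟨x + t a, by rw [add_sub_cancel_right]; exact hxD, ?_⟩
        have hnP : ¬ ∃ a', P a' (x + t a) := by
          rintro ⟨a', hP'⟩
          have haa : a' = a := huniq a' a _ (hQD hP'.1)
            (by rw [add_sub_cancel_right]; exact hxD)
          rw [haa] at hP'
          exact hux (hP'.2 x hxD)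
        rw [hn2 _ hnP, add_sub_cancel_right]
        exact hux
    · -- image unchanged
      intro y
      by_cases hy : ∃ j a, P a (y + N j)
      · obtain ⟨j₀, a, hPa⟩ := hy
        have hyx : y = (y - t a) + t a := (sub_add_cancel y (t a)).symm
        set x : Fin d → ℤ := y - t a with hxdef
        have hsub : ∀ j, (y + N j) - t a = x + N j := by
          intro j; rw [hxdef]; funext i
          simp only [Pi.add_apply, Pi.sub_apply]; ring
        have hx1 : x + N j₀ ∈ cube b k := by rw [← hsub j₀]; exact hPa.1
        have hxmid : ∀ i, b i - (r:ℤ) ≤ x i ∧ x i < b i + k + r := by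
          intro i
          have h1 := mem_cube.mp hx1 i
          have h2 := hNji j₀ i
          simp only [Pi.add_apply] at h1
          omega
        have hxD : x ∈ cube bD K := by
          rw [mem_cube]; intro i
          have := hxmid i
          simp only [hbDdef, hKdef]
          push_cast; omega
        have hθ : θ y = θ x := by
          conv_lhs => rw [hyx]
          exact (ht a).2 x hxD
        have hnbD : ∀ j, x + N j ∈ cube bD K := by
          intro j; rw [mem_cube]; intro i
          have h1 := hxmid i; have h2 := hNji j i
          simp only [Pi.add_apply, hbDdef, hKdef]; push_cast; omega
        have hu : ∀ j, u (y + N j) = c (x + N j) := by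
          intro j
          have hyj : y + N j = (x + N j) + t a := by
            rw [hxdef]; funext i
            simp only [Pi.add_apply, Pi.sub_apply]; ring
          rw [hyj]
          exact hPa.2 _ (hnbD j)
        have hu' : ∀ j, u' (y + N j) = e (x + N j) := by
          intro j
          by_cases hQ : x + N j ∈ cube b k
          · have hPj : P a (y + N j) := ⟨by rw [hsub j]; exact hQ, hPa.2⟩
            rw [hn1 a _ hPj, hsub j]
          · have hnP : ¬ ∃ a', P a' (y + N j) := by
              rintro ⟨a', hP'⟩
              have haa : a' = a := huniq a' a (y + N j) (hQD hP'.1)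
                (by rw [hsub j]; exact hnbD j)
              rw [haa] at hP'
              exact hQ (by rw [← hsub j]; exact hP'.1)
            rw [hn2 _ hnP, hu j]
            by_contra hce'
            exact hQ (hΔQ _ hce')
        calc θ y (fun j => u' (y + N j))
            = θ x (fun j => e (x + N j)) := by
              rw [hθ]; exact congrArg _ (funext fun j => hu' j)
          _ = θ x (fun j => c (x + N j)) := (congrFun hce x).symm
          _ = θ y (fun j => u (y + N j)) := by
              rw [hθ]; exact (congrArg _ (funext fun j => hu j)).symm
      · push_neg at hy
        exact congrArg _ (funext fun j => hn2 _ (fun hx => (hy j hx.choose) hx.choose_spec))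
  -- every pattern on the window is achieved through a reduced configuration
  have hsurW : ∀ p : {x // x ∈ Wn} → S, ∃ u : (Fin d → ℤ) → S,
      ∀ x : {x // x ∈ Wn}, θ x.1 (fun i => u (x.1 + N i)) = p x := by
    intro p
    obtain ⟨u, hu⟩ := hsur (fun z => if h : z ∈ Wn then p ⟨z, h⟩ else s₀)
    exact ⟨u, fun x => (congrFun hu x.1).trans (dif_pos x.2)⟩
  obtain ⟨Φ, hΦdef⟩ : ∃ Φ : {f : {x // x ∈ E} → S //
        ∀ a : {a // a ∈ idx}, ∃ zp, ∃ hz : zp ∈ T a.1,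
          f ⟨zp, hTE a.1 a.2 hz⟩ ≠ c (zp - t a.1)} → ({x // x ∈ Wn} → S),
      ∀ g x, Φ g x = θ x.1 (fun i => extE g.1 (x.1 + N i)) := ⟨_, fun _ _ => rfl⟩
  have hΦsur : Function.Surjective Φ := by
    intro p
    obtain ⟨u, hu⟩ := hsurW p
    obtain ⟨u', hred, hsame⟩ := key u
    have hmem : ∀ a : {a // a ∈ idx}, ∃ zp, ∃ hz : zp ∈ T a.1,
        (fun x : {x // x ∈ E} => u' x.1) ⟨zp, hTE a.1 a.2 hz⟩ ≠ c (zp - t a.1) := by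
      intro a
      obtain ⟨zp, hzD, hzne⟩ := hred a.1 a.2
      exact ⟨zp, (hTD a.1 zp).mpr hzD, hzne⟩
    refine ⟨⟨fun x => u' x.1, hmem⟩, ?_⟩
    funext x
    have hxE : ∀ i, x.1 + N i ∈ E := by
      intro i
      have hx := mem_cube.mp (show x.1 ∈ cube (0 : Fin d → ℤ) L from x.2)
      rw [hEdef, mem_cube]
      intro i'
      have h1 := hx i'
      have h2 := hNji i i'
      simp only [Pi.zero_apply, Pi.add_apply] at h1 ⊢
      push_cast
      omega
    rw [hΦdef]
    have h1 : ∀ i, extE (fun x : {x // x ∈ E} => u' x.1) (x.1 + N i) = u' (x.1 + N i) := by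
      intro i
      rw [hextE, dif_pos (hxE i)]
    exact (congrArg _ (funext h1)).trans ((hsame x.1).trans (hu x))
  -- counting
  have hprodsum : (∏ a : {a // a ∈ idx}, (q ^ ((fun a : {a // a ∈ idx} => T a.1) a).card - 1)) *
        q ^ (E.card - ∑ a : {a // a ∈ idx}, ((fun a : {a // a ∈ idx} => T a.1) a).card)
      ≤ (A - 1) ^ (n ^ d) * q ^ (E.card - n ^ d * K ^ d) := by
    have hc : Fintype.card {a // a ∈ idx} = n ^ d := by
      rw [Fintype.card_coe, hidxdef, card_cube]
    have hp : (∏ a : {a // a ∈ idx}, (q ^ ((fun a : {a // a ∈ idx} => T a.1) a).card - 1))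
        = (A - 1) ^ (n ^ d) := by
      simp only [hTcard]
      rw [Finset.prod_const, Finset.card_univ, hc, hAdef]
    have hs : (∑ a : {a // a ∈ idx}, ((fun a : {a // a ∈ idx} => T a.1) a).card)
        = n ^ d * K ^ d := by
      simp only [hTcard]
      rw [Finset.sum_const, Finset.card_univ, hc, smul_eq_mul]
    rw [hp, hs]
  have harith : (A - 1) ^ (n ^ d) * q ^ (E.card - n ^ d * K ^ d) < q ^ Wn.card := by
    have hA' : A ^ (n ^ d) = q ^ (n ^ d * K ^ d) := by
      rw [hAdef, ← pow_mul]
      congr 1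
      exact Nat.mul_comm _ _
    have hSW : n ^ d * K ^ d ≤ Wn.card := by
      rw [hWcard, hLdef, mul_pow]
      exact Nat.mul_le_mul_left _ (Nat.pow_le_pow_left hKw d)
    have hEW : E.card ≤ Wn.card + C * n ^ (d - 1) := by
      rw [hEcard, hWcard, hCdef]
      have hxg : L + 2*r ≤ (w + 2*r) * n := by
        have h1 : 2*r ≤ 2*r*n := Nat.le_mul_of_pos_right _ hn
        have h2 : (w + 2*r)*n = n*w + 2*r*n := by ring
        rw [hLdef, h2]
        exact Nat.add_le_add_left h1 _
      exact boundary_le n L (2*r) (w + 2*r) hd hxg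
    exact count_lt hq1 hmaster hA' hSW hEW
  have hfinal : q ^ Wn.card < q ^ Wn.card := by
    calc q ^ Wn.card = Fintype.card ({x // x ∈ Wn} → S) := by
          rw [Fintype.card_fun, Fintype.card_coe]
      _ ≤ Fintype.card {f : {x // x ∈ E} → S //
            ∀ a : {a // a ∈ idx}, ∃ zp, ∃ hz : zp ∈ T a.1,
              f ⟨zp, hTE a.1 a.2 hz⟩ ≠ c (zp - t a.1)} :=
          Fintype.card_le_of_surjective Φ hΦsur
      _ ≤ (∏ a : {a // a ∈ idx}, (q ^ ((fun a : {a // a ∈ idx} => T a.1) a).card - 1)) *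
            q ^ (E.card - ∑ a : {a // a ∈ idx}, ((fun a : {a // a ∈ idx} => T a.1) a).card) :=
          card_avoid E (fun a : {a // a ∈ idx} => T a.1) (fun a => hTE a.1 a.2)
            (fun a a' haa => hTdis a.1 a'.1 (fun hv => haa (Subtype.ext hv)))
            (fun a z => c (z - t a.1))
      _ ≤ (A - 1) ^ (n ^ d) * q ^ (E.card - n ^ d * K ^ d) := hprodsum
      _ < q ^ Wn.card := harith
  exact lt_irrefl _ hfinal


/-! ### Myhill direction: failure of surjectivity implies failure of pre-injectivity -/

lemma myhill {S : Type} [Fintype S] [Nonempty S] {d m : ℕ} (hd : 0 < d)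
    (hq2 : 2 ≤ Fintype.card S)
    (N : Fin m → (Fin d → ℤ)) (θ : (Fin d → ℤ) → ((Fin m → S) → S))
    (hrec : UniformlyRecurrent θ)
    (hnsur : ¬ Function.Surjective
        (fun (u : (Fin d → ℤ) → S) (x : Fin d → ℤ) => θ x (fun i => u (x + N i)))) :
    ¬ PreInjective
        (fun (u : (Fin d → ℤ) → S) (x : Fin d → ℤ) => θ x (fun i => u (x + N i))) := by
  classical
  intro hpre
  rw [Function.Surjective] at hnsur
  push_neg at hnsur
  obtain ⟨z, hz⟩ := hnsur
  set q := Fintype.card S with hqdef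
  have hq1 : 1 ≤ q := by omega
  obtain ⟨r, hNr⟩ : ∃ r : ℕ, ∀ j i, (N j i).natAbs ≤ r := by
    refine ⟨Finset.univ.sup fun j : Fin m => Finset.univ.sup fun i : Fin d => (N j i).natAbs,
      fun j i => ?_⟩
    exact le_trans (Finset.le_sup (f := fun i : Fin d => (N j i).natAbs) (Finset.mem_univ i))
      (Finset.le_sup (f := fun j : Fin m => Finset.univ.sup fun i : Fin d => (N j i).natAbs)
        (Finset.mem_univ j))
  have hNji : ∀ j i, -(r:ℤ) ≤ N j i ∧ N j i ≤ (r:ℤ) := by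
    intro j i; have := hNr j i; omega
  -- a finite orphan, by compactness
  have horphfin : ∃ Wf : Finset (Fin d → ℤ),
      ¬ ∃ v : (Fin d → ℤ) → S, ∀ x ∈ Wf, θ x (fun i => v (x + N i)) = z x := by
    by_contra hcon
    push_neg at hcon
    letI : TopologicalSpace S := ⊥
    haveI : DiscreteTopology S := ⟨rfl⟩
    have hclosed : ∀ Wf : Finset (Fin d → ℤ),
        IsClosed {v : (Fin d → ℤ) → S | ∀ x ∈ Wf, θ x (fun i => v (x + N i)) = z x} := by
      intro Wf
      have heq : {v : (Fin d → ℤ) → S | ∀ x ∈ Wf, θ x (fun i => v (x + N i)) = z x}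
          = ⋂ x ∈ Wf, {v : (Fin d → ℤ) → S | θ x (fun i => v (x + N i)) = z x} := by
        ext v; simp
      rw [heq]
      refine isClosed_biInter fun x _ => ?_
      have hcont : Continuous fun v : (Fin d → ℤ) → S => θ x (fun i => v (x + N i)) :=
        Continuous.comp continuous_of_discreteTopology
          (continuous_pi fun i => continuous_apply (x + N i))
      exact isClosed_eq hcont continuous_const
    have hdir : Directed (fun (s₁ s₂ : Set ((Fin d → ℤ) → S)) => s₁ ⊇ s₂)
        (fun Wf : Finset (Fin d → ℤ) =>
          {v : (Fin d → ℤ) → S | ∀ x ∈ Wf, θ x (fun i => v (x + N i)) = z x}) := by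
      intro U V
      refine ⟨U ∪ V, ?_, ?_⟩
      · intro v hv x hx; exact hv x (Finset.mem_union_left _ hx)
      · intro v hv x hx; exact hv x (Finset.mem_union_right _ hx)
    obtain ⟨v, hv⟩ := IsCompact.nonempty_iInter_of_directed_nonempty_isCompact_isClosed
      (fun Wf : Finset (Fin d → ℤ) =>
        {v : (Fin d → ℤ) → S | ∀ x ∈ Wf, θ x (fun i => v (x + N i)) = z x})
      hdir (fun Wf => hcon Wf) (fun Wf => (hclosed Wf).isCompact) hclosed
    apply hz v
    funext x
    exact Set.mem_iInter.mp hv {x} x (Finset.mem_singleton_self x)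
  obtain ⟨Wf, horph⟩ := horphfin
  -- enlarge the orphan window to a cube
  obtain ⟨ρ, hρ⟩ : ∃ ρ : ℕ, ∀ x ∈ Wf, ∀ i, (x i).natAbs ≤ ρ := by
    refine ⟨Wf.sup (fun x => Finset.univ.sup fun i => (x i).natAbs), ?_⟩
    intro x hx i
    exact le_trans (Finset.le_sup (f := fun i : Fin d => (x i).natAbs) (Finset.mem_univ i))
      (Finset.le_sup (f := fun x : Fin d → ℤ => Finset.univ.sup fun i : Fin d => (x i).natAbs) hx)
  set b : Fin d → ℤ := fun _ => -(ρ:ℤ) with hbdef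
  set k : ℕ := 2*ρ+1 with hkdef
  have hk : 1 ≤ k := by omega
  have hWfQ : Wf ⊆ cube b k := by
    intro x hx
    rw [mem_cube]
    intro i
    have h1 := hρ x hx i
    simp only [hbdef]
    push_cast
    omega
  have horphQ : ¬ ∃ v : (Fin d → ℤ) → S, ∀ x ∈ cube b k, θ x (fun i => v (x + N i)) = z x := by
    rintro ⟨v, hv⟩
    exact horph ⟨v, fun x hx => hv x (hWfQ hx)⟩
  obtain ⟨w, hw, t, ht⟩ := exists_tiles θ hrec b k
  have hKw : k ≤ w := cube_side_le hd hk (ht 0).1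
  set A : ℕ := q ^ (k ^ d) with hAdef
  set C : ℕ := d * (2*r) * (w + 4*r)^(d-1) with hCdef
  have hA2 : 2 ≤ A := le_trans hq2 (Nat.le_self_pow (by positivity) q)
  obtain ⟨n, hn, hmaster⟩ := master d q A C hd hq1 hA2
  set L : ℕ := n * w with hLdef
  set idx : Finset (Fin d → ℤ) := cube (0 : Fin d → ℤ) n with hidxdef
  set F : Finset (Fin d → ℤ) := cube (fun _ => -((r:ℕ):ℤ)) (L + 2*r) with hFdef
  set W2 : Finset (Fin d → ℤ) := cube (fun _ => -((2*r:ℕ):ℤ)) ((L + 2*r) + 2*r) with hW2def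
  set T : (Fin d → ℤ) → Finset (Fin d → ℤ) := fun a => cube (fun i => b i + t a i) k with hTdef
  have hTD : ∀ a zz, zz ∈ T a ↔ zz - t a ∈ cube b k := fun a zz => mem_cube_translate
  have hblockmem : ∀ a zz, zz - t a ∈ cube b k → zz ∈ cube (fun i => (w:ℤ) * a i) w := by
    intro a zz hzz
    rw [mem_cube]; intro i
    have h1 := ((ht a).1 _ hzz) i
    simp only [Pi.sub_apply] at h1
    omega
  have hTBlock : ∀ a, T a ⊆ cube (fun i => (w:ℤ) * a i) w :=
    fun a zz hzz => hblockmem a zz ((hTD a zz).mp hzz)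
  have hTW2 : ∀ a ∈ idx, T a ⊆ W2 := by
    intro a ha zz hzz
    have h1 : zz ∈ cube (0 : Fin d → ℤ) (n * w) := block_in_window ha (hTBlock a hzz)
    have h2 := mem_cube.mp h1
    rw [hW2def, mem_cube]
    intro i
    have := h2 i
    simp only [Pi.zero_apply] at this
    rw [← hLdef] at this
    push_cast
    omega
  have hTdis : ∀ a a', a ≠ a' → Disjoint (T a) (T a') := by
    intro a a' hne'
    exact (block_disjoint hw hne').mono (hTBlock a) (hTBlock a')
  have hFcard : F.card = (L + 2*r)^d := by rw [hFdef]; exact card_cube _ _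
  have hW2card : W2.card = ((L + 2*r) + 2*r)^d := by rw [hW2def]; exact card_cube _ _
  have hTcard : ∀ a, (T a).card = k^d := fun a => by rw [hTdef]; exact card_cube _ _
  set s₀ : S := Classical.arbitrary S with hs₀
  obtain ⟨extF, hextF⟩ : ∃ extF : ({x // x ∈ F} → S) → (Fin d → ℤ) → S,
      ∀ g zz, extF g zz = if h : zz ∈ F then g ⟨zz, h⟩ else s₀ := ⟨_, fun _ _ => rfl⟩
  -- every image avoids the translated orphan pattern on every tile
  have havoid : ∀ (u : (Fin d → ℤ) → S) (a : Fin d → ℤ), ∃ x, ∃ hx : x ∈ T a,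
      θ x (fun i => u (x + N i)) ≠ z (x - t a) := by
    intro u a
    by_contra hcon
    push_neg at hcon
    apply horphQ
    refine ⟨fun y => u (y + t a), fun x hx => ?_⟩
    have hθ := (ht a).2 x hx
    have hmem : x + t a ∈ T a := (hTD a _).mpr (by rw [add_sub_cancel_right]; exact hx)
    have h1 := hcon (x + t a) hmem
    rw [add_sub_cancel_right] at h1
    show θ x (fun i => u ((x + N i) + t a)) = z x
    calc θ x (fun i => u ((x + N i) + t a))
        = θ (x + t a) (fun i => u ((x + t a) + N i)) := by
          rw [← hθ]
          exact congrArg _ (funext fun i => by rw [add_right_comm])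
      _ = z x := h1
  -- the pigeonhole map
  obtain ⟨Ψ, hΨdef⟩ : ∃ Ψ : ({x // x ∈ F} → S) → {f : {x // x ∈ W2} → S //
        ∀ a : {a // a ∈ idx}, ∃ x, ∃ hx : x ∈ T a.1,
          f ⟨x, hTW2 a.1 a.2 hx⟩ ≠ z (x - t a.1)},
      ∀ g, (Ψ g).1 = fun x => θ x.1 (fun i => extF g (x.1 + N i)) :=
    ⟨fun g => ⟨fun x => θ x.1 (fun i => extF g (x.1 + N i)), by
      intro a
      obtain ⟨x, hx, hne⟩ := havoid (extF g) a.1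
      exact ⟨x, hx, hne⟩⟩, fun _ => rfl⟩
  have hlt : Fintype.card {f : {x // x ∈ W2} → S //
        ∀ a : {a // a ∈ idx}, ∃ x, ∃ hx : x ∈ T a.1,
          f ⟨x, hTW2 a.1 a.2 hx⟩ ≠ z (x - t a.1)}
      < Fintype.card ({x // x ∈ F} → S) := by
    have hc : Fintype.card {a // a ∈ idx} = n ^ d := by
      rw [Fintype.card_coe, hidxdef, card_cube]
    have harith : (A - 1) ^ (n ^ d) * q ^ (W2.card - n ^ d * k ^ d) < q ^ F.card := by
      have hA' : A ^ (n ^ d) = q ^ (n ^ d * k ^ d) := by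
        rw [hAdef, ← pow_mul]
        congr 1
        exact Nat.mul_comm _ _
      have hSW : n ^ d * k ^ d ≤ F.card := by
        rw [hFcard]
        calc n ^ d * k ^ d ≤ n ^ d * w ^ d :=
              Nat.mul_le_mul_left _ (Nat.pow_le_pow_left hKw d)
          _ = L ^ d := by rw [hLdef, mul_pow]
          _ ≤ (L + 2*r) ^ d := Nat.pow_le_pow_left (by omega) d
      have hEW : W2.card ≤ F.card + C * n ^ (d - 1) := by
        rw [hW2card, hFcard, hCdef]
        have hxg : (L + 2*r) + 2*r ≤ (w + 4*r) * n := by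
          have h1 : 4*r ≤ 4*r*n := Nat.le_mul_of_pos_right _ hn
          have h2 : (w + 4*r)*n = n*w + 4*r*n := by ring
          rw [hLdef, h2]
          omega
        exact boundary_le n (L + 2*r) (2*r) (w + 4*r) hd hxg
      exact count_lt hq1 hmaster hA' hSW hEW
    calc Fintype.card {f : {x // x ∈ W2} → S //
          ∀ a : {a // a ∈ idx}, ∃ x, ∃ hx : x ∈ T a.1,
            f ⟨x, hTW2 a.1 a.2 hx⟩ ≠ z (x - t a.1)}
        ≤ (∏ a : {a // a ∈ idx}, (q ^ ((fun a : {a // a ∈ idx} => T a.1) a).card - 1)) *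
            q ^ (W2.card - ∑ a : {a // a ∈ idx}, ((fun a : {a // a ∈ idx} => T a.1) a).card) :=
          card_avoid W2 (fun a : {a // a ∈ idx} => T a.1) (fun a => hTW2 a.1 a.2)
            (fun a a' haa => hTdis a.1 a'.1 (fun hv => haa (Subtype.ext hv)))
            (fun a zz => z (zz - t a.1))
      _ ≤ (A - 1) ^ (n ^ d) * q ^ (W2.card - n ^ d * k ^ d) := by
          have hp : (∏ a : {a // a ∈ idx}, (q ^ ((fun a : {a // a ∈ idx} => T a.1) a).card - 1))
              = (A - 1) ^ (n ^ d) := by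
            simp only [hTcard]
            rw [Finset.prod_const, Finset.card_univ, hc, hAdef]
          have hs : (∑ a : {a // a ∈ idx}, ((fun a : {a // a ∈ idx} => T a.1) a).card)
              = n ^ d * k ^ d := by
            simp only [hTcard]
            rw [Finset.sum_const, Finset.card_univ, hc, smul_eq_mul]
          rw [hp, hs]
      _ < q ^ F.card := harith
      _ = Fintype.card ({x // x ∈ F} → S) := by rw [Fintype.card_fun, Fintype.card_coe]
  obtain ⟨g₁, g₂, hgne, hΨeq⟩ := Fintype.exists_ne_map_eq_of_card_lt Ψ hlt
  -- the two asymptotic configurations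
  have hout : ∀ y : Fin d → ℤ, y ∉ W2 → ∀ j, y + N j ∉ F := by
    intro y hy j hmem
    rw [hW2def, mem_cube] at hy
    push_neg at hy
    obtain ⟨i1, hi1⟩ := hy
    obtain ⟨h2a, h2b⟩ := mem_cube.mp hmem i1
    have h2a' : -((r:ℕ):ℤ) ≤ y i1 + N j i1 := h2a
    have h2b' : y i1 + N j i1 < -((r:ℕ):ℤ) + ((L + 2*r : ℕ):ℤ) := h2b
    have h3 := hNji j i1
    clear h2a h2b
    by_cases hcase : -((2*r:ℕ):ℤ) ≤ y i1
    · have h4 : -((2*r:ℕ):ℤ) + ((L + 2*r + 2*r : ℕ):ℤ) ≤ y i1 := hi1 hcase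
      clear * - h2a' h2b' h3 h4
      push_cast at h2a' h2b' h4 ⊢
      omega
    · clear * - h2a' h2b' h3 hcase
      push_cast at h2a' h2b' hcase ⊢
      omega
  have hceq : (fun (x : Fin d → ℤ) => θ x (fun i => extF g₁ (x + N i)))
      = (fun (x : Fin d → ℤ) => θ x (fun i => extF g₂ (x + N i))) := by
    funext y
    by_cases hy : y ∈ W2
    · have h1 : (Ψ g₁).1 = (Ψ g₂).1 := by rw [hΨeq]
      rw [hΨdef, hΨdef] at h1
      exact congrFun h1 ⟨y, hy⟩
    · have hnb : ∀ i, extF g₁ (y + N i) = extF g₂ (y + N i) := by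
        intro i
        have houtF := hout y hy i
        rw [hextF, hextF, dif_neg houtF, dif_neg houtF]
      exact congrArg _ (funext hnb)
  have hdiff : {x : Fin d → ℤ | extF g₁ x ≠ extF g₂ x}.Finite := by
    apply Set.Finite.subset F.finite_toSet
    intro x hx
    by_contra hxF
    apply hx
    have hxF' : x ∉ F := fun hh => hxF (Finset.mem_coe.mpr hh)
    rw [hextF, hextF, dif_neg hxF', dif_neg hxF']
  have heq := hpre (extF g₁) (extF g₂) hdiff hceq
  apply hgne
  funext x
  have hx := congrFun heq x.1
  rw [hextF, hextF, dif_pos x.2, dif_pos x.2] at hx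
  exact hx

end GoEAux

/-- Garden of Eden theorem for uniformly recurrent NUCA: if `θ` is a
uniformly recurrent rule distribution over ℤ^d, then the global update rule `H_θ`
is surjective if and only if it is pre-injective. -/
theorem stmt_6 {S : Type} [Fintype S] [Nonempty S] {d m : ℕ} (hd : 0 < d)
    (N : Fin m → (Fin d → ℤ)) (θ : (Fin d → ℤ) → ((Fin m → S) → S))
    (hrec : UniformlyRecurrent θ)
    (H : ((Fin d → ℤ) → S) → ((Fin d → ℤ) → S))
    (hH : H = fun c x => θ x (fun i => c (x + N i))) :
    Function.Surjective H ↔ PreInjective H := by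
  subst hH
  rcases subsingleton_or_nontrivial S with hS | hS
  · constructor
    · intro _ c e _ _
      funext x
      exact Subsingleton.elim _ _
    · intro _ z
      exact ⟨z, funext fun x => Subsingleton.elim _ _⟩
  · have hq2 : 2 ≤ Fintype.card S := Fintype.one_lt_card_iff_nontrivial.mpr hS
    constructor
    · intro hsur c e hfin hHce
      by_contra hne
      exact GoEAux.moore hd hq2 N θ hrec c e hfin hne hHce hsur
    · intro hpre
      by_contra hnsur
      exact GoEAux.myhill hd hq2 N θ hrec hnsur hpre
end

section
/- Let θ ∈ R^ℤ be a recurrent rule distribution (every finite pattern appearing in θ appears at least twice, equivalently infinitely often). If the one-dimensional global update rule H_θ is not surjective, then it is not pre-injective. -/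
/-- A configuration `θ` over ℤ is recurrent if every finite pattern occurring in it
occurs at a second, different position (i.e. some nonzero translate of the pattern
also occurs in `θ`). -/
def Recurrent {R : Type} (θ : ℤ → R) : Prop :=
  ∀ D : Finset ℤ, ∃ t : ℤ, t ≠ 0 ∧ ∀ x ∈ D, θ (x + t) = θ x

lemma exists_orphan' {S : Type} [Fintype S] [Nonempty S] {m : ℕ}
    (N : Fin m → ℤ) (θ : ℤ → ((Fin m → S) → S))
    (H : (ℤ → S) → (ℤ → S))
    (hH : H = fun c x => θ x (fun i => c (x + N i)))
    (hns : ¬ Function.Surjective H) :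
    ∃ (e : ℤ → S) (I : Finset ℤ), ∀ c : ℤ → S, ∃ x ∈ I, H c x ≠ e x := by
  classical
  letI : TopologicalSpace S := ⊥
  haveI : DiscreteTopology S := ⟨rfl⟩
  have hcont : Continuous H := by
    subst hH
    refine continuous_pi fun x => ?_
    exact (continuous_of_discreteTopology (f := θ x)).comp
      (continuous_pi fun i => continuous_apply (x + N i))
  obtain ⟨e, he⟩ := not_forall.mp hns
  have hopen : IsOpen (Set.range H)ᶜ := ((isCompact_range hcont).isClosed).isOpen_compl
  obtain ⟨I, u, hu, hsub⟩ := isOpen_pi_iff.mp hopen e he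
  refine ⟨e, I, fun c => ?_⟩
  by_contra hcon
  push_neg at hcon
  have : H c ∈ (Set.range H)ᶜ := by
    apply hsub
    intro x hx
    rw [hcon x hx]
    exact (hu x hx).2
  exact this ⟨c, rfl⟩

lemma exists_far' {R : Type} (θ : ℤ → R) (hrec : Recurrent θ) (D : Finset ℤ) (z : ℤ) :
    ∃ t : ℤ, (∀ x ∈ D, θ (x + t) = θ x) ∧ z < |t| := by
  classical
  by_contra hcon
  push_neg at hcon
  have hP0 : ∀ x ∈ D, θ (x + (0:ℤ)) = θ x := fun x _ => by rw [add_zero]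
  set P : ℤ → Prop := fun t => ∀ x ∈ D, θ (x + t) = θ x with hPdef
  have hPle : ∀ t, P t → |t| ≤ z := hcon
  set T : Finset ℤ := (Finset.Icc (-z) z).filter P with hT
  have hmemT : ∀ t, P t → t ∈ T := by
    intro t ht
    simp only [hT, Finset.mem_filter, Finset.mem_Icc]
    exact ⟨abs_le.mp (hPle t ht), ht⟩
  have h0T : (0:ℤ) ∈ T := hmemT 0 hP0
  obtain ⟨t, ht0, htD⟩ := hrec (T.biUnion (fun s => D.image (· + s)))
  have hshift : ∀ s ∈ T, s + t ∈ T := by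
    intro s hs
    apply hmemT
    intro x hx
    have h1 : θ ((x + s) + t) = θ (x + s) := by
      apply htD
      exact Finset.mem_biUnion.mpr ⟨s, hs, Finset.mem_image.mpr ⟨x, hx, rfl⟩⟩
    have h2 : θ (x + s) = θ x := (Finset.mem_filter.mp hs).2 x hx
    calc θ (x + (s + t)) = θ ((x + s) + t) := by ring_nf
    _ = θ (x + s) := h1
    _ = θ x := h2
  have himg : T.image (· + t) = T := by
    apply Finset.eq_of_subset_of_card_le
    · intro y hy
      obtain ⟨s, hs, rfl⟩ := Finset.mem_image.mp hy
      exact hshift s hs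
    · rw [Finset.card_image_of_injective _ (add_left_injective t)]
  have hsum : ∑ s ∈ T.image (· + t), s = ∑ s ∈ T, s := by rw [himg]
  rw [Finset.sum_image (fun a _ b _ h => by omega)] at hsum
  rw [Finset.sum_add_distrib, Finset.sum_const, nsmul_eq_mul] at hsum
  have hcard : 0 < T.card := Finset.card_pos.mpr ⟨0, h0T⟩
  have hz : (T.card : ℤ) * t = 0 := by omega
  rcases mul_eq_zero.mp hz with h | h
  · exact absurd h (by positivity)
  · exact ht0 h

lemma exists_seq' {R : Type} (θ : ℤ → R) (hrec : Recurrent θ) (D : Finset ℤ)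
    (c : ℤ) (hc : 0 ≤ c) :
    ∃ u : ℕ → ℤ, (∀ j, ∀ x ∈ D, θ (x + u j) = θ x) ∧
      ∀ i j : ℕ, i < j → |u i| + c < |u j| := by
  classical
  have step : ∀ z : ℤ, ∃ t : ℤ, (∀ x ∈ D, θ (x + t) = θ x) ∧ z < |t| :=
    exists_far' θ hrec D
  let u : ℕ → ℤ := fun j => Nat.rec (0:ℤ) (fun _ p => (step (|p| + c)).choose) j
  have hu0 : u 0 = 0 := rfl
  have husucc : ∀ j, u (j+1) = (step (|u j| + c)).choose := fun j => rfl
  have hgood : ∀ j, ∀ x ∈ D, θ (x + u j) = θ x := by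
    intro j
    cases j with
    | zero => intro x _; rw [hu0, add_zero]
    | succ j => rw [husucc]; exact (step (|u j| + c)).choose_spec.1
  have hgrow : ∀ j, |u j| + c < |u (j+1)| := by
    intro j; rw [husucc]; exact (step (|u j| + c)).choose_spec.2
  refine ⟨u, hgood, ?_⟩
  intro i j hij
  induction j with
  | zero => omega
  | succ j ih =>
    rcases Nat.lt_succ_iff_lt_or_eq.mp hij with h | h
    · have h1 := ih h
      have h2 := hgrow j
      omega
    · subst h; exact hgrow i

lemma pow_aux' (x n : ℕ) (hx : 1 ≤ x) : x^(n+1) + (n+1) * x^n ≤ (x+1)^(n+1) := by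
  induction n with
  | zero => simp
  | succ n ih =>
    calc x^(n+1+1) + (n+1+1) * x^(n+1)
        ≤ (x^(n+1) + (n+1) * x^n) * (x+1) := by
          ring_nf; nlinarith [Nat.one_le_pow n x (by omega)]
      _ ≤ (x+1)^(n+1) * (x+1) := Nat.mul_le_mul_right _ ih
      _ = (x+1)^(n+1+1) := by ring

set_option maxHeartbeats 1000000 in
/-- if `θ` is a recurrent rule distribution over ℤ and the global
update rule `H_θ` of the 1-dimensional NUCA is not surjective, then it is not
pre-injective. -/
theorem stmt_7 {S : Type} [Fintype S] [Nonempty S] {m : ℕ}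
    (N : Fin m → ℤ) (θ : ℤ → ((Fin m → S) → S))
    (hrec : Recurrent θ)
    (H : (ℤ → S) → (ℤ → S))
    (hH : H = fun c x => θ x (fun i => c (x + N i)))
    (hns : ¬ Function.Surjective H) :
    ¬ PreInjective H := by
  classical
  intro hpre
  have hHapp : ∀ c x, H c x = θ x (fun i => c (x + N i)) := fun c x => by rw [hH]
  obtain ⟨q, hq⟩ : ∃ q, q = Fintype.card S := ⟨_, rfl⟩
  have hq2 : 2 ≤ q := by
    rw [hq]
    by_contra h
    push_neg at h
    haveI : Subsingleton S := Fintype.card_le_one_iff_subsingleton.mp (by omega)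
    exact hns (fun e => ⟨e, funext fun x => Subsingleton.elim _ _⟩)
  obtain ⟨e, I, horphan⟩ := exists_orphan' N θ H hH hns
  obtain ⟨M, hM⟩ : ∃ M : ℕ, M = I.sup (fun x => x.natAbs) + 1 := ⟨_, rfl⟩
  have hM1 : 1 ≤ M := by omega
  have hIsub : ∀ x ∈ I, -(M:ℤ) ≤ x ∧ x < (M:ℤ) := by
    intro x hx
    have h : x.natAbs ≤ I.sup (fun x => x.natAbs) := Finset.le_sup hx
    omega
  obtain ⟨kN, hkN⟩ : ∃ kN : ℕ, kN = 2 * M := ⟨_, rfl⟩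
  obtain ⟨a, ha⟩ : ∃ a : ℤ, a = -(M:ℤ) := ⟨_, rfl⟩
  obtain ⟨r, hr⟩ : ∃ r : ℕ, r = Finset.univ.sup (fun i => (N i).natAbs) := ⟨_, rfl⟩
  have hNr : ∀ i, -(r:ℤ) ≤ N i ∧ N i ≤ (r:ℤ) := by
    intro i
    have h : (N i).natAbs ≤ Finset.univ.sup (fun i => (N i).natAbs) :=
      Finset.le_sup (f := fun i => (N i).natAbs) (Finset.mem_univ i)
    omega
  obtain ⟨xq, hxq⟩ : ∃ xq : ℕ, xq = q ^ kN - 1 := ⟨_, rfl⟩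
  have hqk1 : 2 ≤ q ^ kN := by
    calc 2 = 2^1 := rfl
    _ ≤ q ^ kN := (Nat.pow_le_pow_left (by omega) 1).trans
        (Nat.pow_le_pow_right (by omega) (by omega))
  have hxq1 : xq + 1 = q ^ kN := by omega
  have hxqpos : 1 ≤ xq := by omega
  obtain ⟨n, hn⟩ : ∃ n : ℕ, n = xq * q ^ (2*r) + 1 := ⟨_, rfl⟩
  have hn0 : 0 < n := by omega
  obtain ⟨u, hugood, hugrow⟩ := exists_seq' θ hrec (Finset.Ico a (a + (kN:ℤ)))
    (kN : ℤ) (by positivity)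
  obtain ⟨W, hW⟩ : ∃ W : Fin n → Finset ℤ,
      W = fun j : Fin n => Finset.Ico (a + u (j:ℕ)) (a + (kN:ℤ) + u (j:ℕ)) := ⟨_, rfl⟩
  have hWdisj : ∀ i j : Fin n, i ≠ j → Disjoint (W i) (W j) := by
    intro i j hij
    rw [Finset.disjoint_left]
    intro x hxi hxj
    simp only [hW, Finset.mem_Ico] at hxi hxj
    have hvij : (i:ℕ) ≠ (j:ℕ) := fun h => hij (Fin.ext h)
    rcases Nat.lt_or_ge (i:ℕ) (j:ℕ) with h | h
    · have hg := hugrow _ _ h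
      rcases abs_cases (u (i:ℕ)) with ⟨h1, h2⟩ | ⟨h1, h2⟩ <;>
        rcases abs_cases (u (j:ℕ)) with ⟨h3, h4⟩ | ⟨h3, h4⟩ <;> omega
    · have h' : (j:ℕ) < (i:ℕ) := by omega
      have hg := hugrow _ _ h'
      rcases abs_cases (u (i:ℕ)) with ⟨h1, h2⟩ | ⟨h1, h2⟩ <;>
        rcases abs_cases (u (j:ℕ)) with ⟨h3, h4⟩ | ⟨h3, h4⟩ <;> omega
  haveI hne' : Nonempty (Fin n) := ⟨⟨0, hn0⟩⟩
  obtain ⟨A, hA⟩ : ∃ A : ℤ,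
      A = Finset.univ.inf' Finset.univ_nonempty (fun j : Fin n => a + u (j:ℕ)) := ⟨_, rfl⟩
  obtain ⟨B, hB⟩ : ∃ B : ℤ,
      B = Finset.univ.sup' Finset.univ_nonempty
        (fun j : Fin n => a + (kN:ℤ) + u (j:ℕ)) := ⟨_, rfl⟩
  have hAle : ∀ j : Fin n, A ≤ a + u (j:ℕ) := fun j => by
    rw [hA]
    exact Finset.inf'_le (fun j : Fin n => a + u (j:ℕ)) (Finset.mem_univ j)
  have hBle : ∀ j : Fin n, a + (kN:ℤ) + u (j:ℕ) ≤ B := fun j => by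
    rw [hB]
    exact Finset.le_sup' (fun j : Fin n => a + (kN:ℤ) + u (j:ℕ)) (Finset.mem_univ j)
  have hAB : A ≤ B := by
    have h1 := hAle ⟨0, hn0⟩
    have h2 := hBle ⟨0, hn0⟩
    have : (0:ℤ) ≤ (kN:ℤ) := by positivity
    omega
  obtain ⟨E, hE⟩ : ∃ E : Finset ℤ, E = Finset.Ico A B := ⟨_, rfl⟩
  obtain ⟨Ep, hEp⟩ : ∃ Ep : Finset ℤ, Ep = Finset.Ico (A - (r:ℤ)) (B + (r:ℤ)) := ⟨_, rfl⟩
  have hWsubE : ∀ j, W j ⊆ E := by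
    intro j x hx
    simp only [hW, Finset.mem_Ico] at hx
    have h1 := hAle j
    have h2 := hBle j
    simp only [hE, Finset.mem_Ico]
    omega
  have hEsub : E ⊆ Ep := by
    intro x hx
    simp only [hE, Finset.mem_Ico] at hx
    simp only [hEp, Finset.mem_Ico]
    have : (0:ℤ) ≤ (r:ℤ) := by positivity
    omega
  obtain ⟨Wall, hWall⟩ : ∃ Wall : Finset ℤ, Wall = Finset.univ.biUnion W := ⟨_, rfl⟩
  obtain ⟨Rest, hRest⟩ : ∃ Rest : Finset ℤ, Rest = Ep \ Wall := ⟨_, rfl⟩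
  obtain ⟨cE, hcE⟩ : ∃ cE : ℕ, cE = E.card := ⟨_, rfl⟩
  have hcardE : cE = (B - A).toNat := by rw [hcE, hE, Int.card_Ico]
  have hcardEp : Ep.card = cE + 2*r := by
    rw [hEp, Int.card_Ico, hcardE]
    omega
  have hcardW : ∀ j, (W j).card = kN := by
    intro j
    simp only [hW, Int.card_Ico]
    omega
  have hWallsub : Wall ⊆ Ep := by
    rw [hWall]
    exact Finset.biUnion_subset.mpr fun j _ => (hWsubE j).trans hEsub
  have hcardWall : Wall.card = n * kN := by
    rw [hWall, Finset.card_biUnion (fun i _ j _ h => hWdisj i j h)]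
    simp [hcardW, Finset.sum_const, mul_comm]
  have hnkle : n * kN ≤ cE + 2*r := by
    rw [← hcardEp, ← hcardWall]
    exact Finset.card_le_card hWallsub
  have hcardRest : Rest.card = cE + 2*r - n*kN := by
    rw [hRest, Finset.card_sdiff_of_subset hWallsub, hcardWall, hcardEp]
  obtain ⟨s0, hs0⟩ : ∃ s0 : S, s0 = Classical.arbitrary S := ⟨_, rfl⟩
  obtain ⟨φ, hφ⟩ : ∃ φ : (↥E → S) → (ℤ → S),
      φ = fun f x => if h : x ∈ E then f ⟨x, h⟩ else s0 := ⟨_, rfl⟩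
  have horph2 : ∀ (j : ℕ) (c : ℤ → S),
      ∃ x ∈ Finset.Ico a (a + (kN:ℤ)), H c (x + u j) ≠ e x := by
    intro j c
    obtain ⟨x, hxI, hx⟩ := horphan (fun y => c (y + u j))
    have hxm : x ∈ Finset.Ico a (a + (kN:ℤ)) := by
      have := hIsub x hxI
      simp only [Finset.mem_Ico]
      omega
    refine ⟨x, hxm, ?_⟩
    intro hcon
    apply hx
    rw [hHapp] at hcon ⊢
    rw [hugood j x hxm] at hcon
    rw [← hcon]
    exact congrArg _ (funext fun i => congrArg c (by ring))
  obtain ⟨o, ho⟩ : ∃ o : Fin kN → S, o = fun i : Fin kN => e (a + (i:ℤ)) := ⟨_, rfl⟩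
  have horphFin : ∀ (j : Fin n) (c : ℤ → S),
      (fun i : Fin kN => H c (a + (i:ℤ) + u (j:ℕ))) ≠ o := by
    intro j c hcon
    obtain ⟨x, hx, hne⟩ := horph2 (j:ℕ) c
    simp only [Finset.mem_Ico] at hx
    have hilt : (x - a).toNat < kN := by omega
    have hxi : a + (((⟨(x - a).toNat, hilt⟩ : Fin kN) : ℕ) : ℤ) = x := by
      show a + ((x - a).toNat : ℤ) = x
      omega
    have h2 := congrFun hcon (⟨(x - a).toNat, hilt⟩ : Fin kN)
    simp only [ho] at h2
    rw [hxi] at h2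
    exact hne h2
  obtain ⟨Φ, hΦ⟩ : ∃ Φ : (↥E → S) → (∀ _ : Fin n, {g : Fin kN → S // g ≠ o}) × (↥Rest → S),
      Φ = fun f =>
        (fun j => ⟨fun i => H (φ f) (a + (i:ℤ) + u (j:ℕ)), horphFin j (φ f)⟩,
         fun x => H (φ f) x.1) := ⟨_, rfl⟩
  have hΦinj : Function.Injective Φ := by
    intro f f' hff
    rw [hΦ] at hff
    have h1 := congrArg Prod.fst hff
    have h2 := congrArg Prod.snd hff
    simp only at h1 h2
    have himg : H (φ f) = H (φ f') := by
      funext x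
      by_cases hxEp : x ∈ Ep
      · by_cases hxW : x ∈ Wall
        · rw [hWall] at hxW
          obtain ⟨j, -, hjx⟩ := Finset.mem_biUnion.mp hxW
          simp only [hW, Finset.mem_Ico] at hjx
          have hilt : (x - a - u (j:ℕ)).toNat < kN := by omega
          have hxi : a + (((⟨(x - a - u (j:ℕ)).toNat, hilt⟩ : Fin kN) : ℕ) : ℤ)
              + u (j:ℕ) = x := by
            show a + ((x - a - u (j:ℕ)).toNat : ℤ) + u (j:ℕ) = x
            omega
          have h3 : H (φ f) (a + (((⟨(x - a - u (j:ℕ)).toNat, hilt⟩ : Fin kN) : ℕ) : ℤ)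
                + u (j:ℕ))
              = H (φ f') (a + (((⟨(x - a - u (j:ℕ)).toNat, hilt⟩ : Fin kN) : ℕ) : ℤ)
                + u (j:ℕ)) :=
            congrFun (congrArg Subtype.val (congrFun h1 j))
              (⟨(x - a - u (j:ℕ)).toNat, hilt⟩ : Fin kN)
          rwa [hxi] at h3
        · have hxR : x ∈ Rest := by
            rw [hRest]
            exact Finset.mem_sdiff.mpr ⟨hxEp, hxW⟩
          exact congrFun h2 ⟨x, hxR⟩
      · rw [hHapp, hHapp]
        congr 1
        funext i
        have hiN := hNr i
        have hnotE : x + N i ∉ E := by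
          rw [hEp] at hxEp
          simp only [Finset.mem_Ico, not_and_or, not_le, not_lt] at hxEp
          simp only [hE, Finset.mem_Ico, not_and_or, not_le, not_lt]
          omega
        simp only [hφ, dif_neg hnotE]
    have hasym : {y : ℤ | φ f y ≠ φ f' y}.Finite := by
      apply Set.Finite.subset (E : Finset ℤ).finite_toSet
      intro y hy
      simp only [Set.mem_setOf_eq] at hy
      by_contra hyE
      rw [Finset.mem_coe] at hyE
      apply hy
      simp only [hφ, dif_neg hyE]
    have hφeq := hpre (φ f) (φ f') hasym himg
    funext z
    have h4 := congrFun hφeq z.1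
    rw [hφ] at h4
    simpa only [dif_pos z.2, Subtype.coe_eta] using h4
  have hcard := Fintype.card_le_of_injective Φ hΦinj
  have hcdom : Fintype.card (↥E → S) = q ^ cE := by
    rw [Fintype.card_fun, Fintype.card_coe, hq, hcE]
  have hsubne : Fintype.card {g : Fin kN → S // g ≠ o} = xq := by
    have hc := Fintype.card_subtype_compl (fun g : Fin kN → S => g = o)
    simp only [Fintype.card_subtype_eq] at hc
    have hcf : Fintype.card (Fin kN → S) = q ^ kN := by
      rw [Fintype.card_fun, Fintype.card_fin, hq]
    have h' : Fintype.card {g : Fin kN → S // ¬ g = o} = q ^ kN - 1 := by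
      rw [hc, hcf]
    rw [hxq]
    convert h' using 2
  have hccod : Fintype.card
      ((∀ _ : Fin n, {g : Fin kN → S // g ≠ o}) × (↥Rest → S))
      = xq ^ n * q ^ (cE + 2*r - n*kN) := by
    rw [Fintype.card_prod, Fintype.card_pi, Fintype.card_fun, Fintype.card_coe,
      hcardRest, hq]
    simp only [hsubne, Finset.prod_const, Finset.card_univ, Fintype.card_fin]
  rw [hcdom, hccod] at hcard
  have hqpos : 0 < q := by omega
  have h5 : q ^ cE * q ^ (n*kN) ≤ xq ^ n * q ^ (2*r) * q ^ cE := by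
    calc q ^ cE * q ^ (n*kN)
        ≤ (xq ^ n * q ^ (cE + 2*r - n*kN)) * q ^ (n*kN) :=
          Nat.mul_le_mul_right _ hcard
      _ = xq ^ n * q ^ (cE + 2*r) := by
          rw [mul_assoc, ← pow_add]
          congr 2
          omega
      _ = xq ^ n * q ^ (2*r) * q ^ cE := by
          rw [mul_assoc, ← pow_add]
          congr 2
          omega
  have h6 : q ^ (n*kN) ≤ xq ^ n * q ^ (2*r) := by
    have hp : 0 < q ^ cE := pow_pos hqpos cE
    exact Nat.le_of_mul_le_mul_right (by
      calc q ^ (n*kN) * q ^ cE = q ^ cE * q ^ (n*kN) := by ring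
      _ ≤ xq ^ n * q ^ (2*r) * q ^ cE := h5) hp
  have h7 : q ^ (n*kN) = (xq+1) ^ n := by
    rw [hxq1, ← pow_mul, mul_comm kN n]
  obtain ⟨n', hn'⟩ : ∃ n' : ℕ, n' = xq * q ^ (2*r) := ⟨_, rfl⟩
  have hnn' : n = n' + 1 := by rw [hn, hn']
  have h8 := pow_aux' xq n' hxqpos
  have h6' : (xq+1) ^ (n'+1) ≤ xq ^ (n'+1) * q ^ (2*r) := by
    rw [← hnn', ← h7]
    exact h6
  have h9 : xq ^ (n'+1) * q ^ (2*r) = xq ^ n' * n' := by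
    rw [pow_succ, mul_assoc, ← hn']
  rw [h9] at h6'
  have h10 := le_trans h8 h6'
  have h11 : (n'+1) * xq ^ n' = n' * xq ^ n' + xq ^ n' := by ring
  have h12 : xq ^ n' * n' = n' * xq ^ n' := by ring
  rw [h11, h12] at h10
  have hP : 1 ≤ xq ^ n' := Nat.one_le_pow _ _ (by omega)
  omega
end

section
/- Let θ ∈ R^ℤ be a recurrent rule distribution. If the one-dimensional global update rule H_θ is not pre-injective, then it is not surjective. -/
lemma recur_infinite {R : Type} {θ : ℤ → R} (hrec : Recurrent θ) (D : Finset ℤ) :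
    {t : ℤ | ∀ x ∈ D, θ (x + t) = θ x}.Infinite := by
  classical
  set T := {t : ℤ | ∀ x ∈ D, θ (x + t) = θ x} with hT
  by_contra hinf
  rw [Set.not_infinite] at hinf
  have h0 : (0:ℤ) ∈ T := by intro x hx; simp
  set F := hinf.toFinset with hF
  have hFmem : ∀ s, s ∈ F ↔ s ∈ T := fun s => hinf.mem_toFinset
  obtain ⟨t', ht'ne, ht'⟩ := hrec (F.biUnion (fun s => D.image (· + s)))
  have hclosed : ∀ s ∈ F, s + t' ∈ F := by
    intro s hs
    have hsT : s ∈ T := (hFmem s).1 hs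
    rw [hFmem]
    intro x hx
    have hmem : x + s ∈ F.biUnion (fun s => D.image (· + s)) :=
      Finset.mem_biUnion.2 ⟨s, hs, Finset.mem_image.2 ⟨x, hx, rfl⟩⟩
    calc θ (x + (s + t')) = θ ((x + s) + t') := by ring_nf
      _ = θ (x + s) := ht' _ hmem
      _ = θ x := hsT x hx
  have hne : F.Nonempty := ⟨0, (hFmem 0).2 h0⟩
  have h1 : F.max' hne + t' ≤ F.max' hne := Finset.le_max' F _ (hclosed _ (F.max'_mem hne))
  have h2 : F.min' hne ≤ F.min' hne + t' := Finset.min'_le F _ (hclosed _ (F.min'_mem hne))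
  omega

lemma exists_sep {T : Set ℤ} (hT : T.Infinite) (n g : ℕ) :
    ∃ f : Fin n → ℤ, (∀ k, f k ∈ T) ∧ ∀ i j : Fin n, i < j → (g : ℤ) < |f j - f i| := by
  have key : ∀ M : ℕ, ∃ t, t ∈ T ∧ M < t.natAbs := by
    intro M
    by_contra h
    push_neg at h
    exact hT (Set.Finite.subset (Set.finite_Icc (-(M:ℤ)) M) (fun t ht => by
      have := h t ht; simp only [Set.mem_Icc]; omega))
  choose pick h1 h2 using key
  set f0 : ℕ → ℤ := fun k => Nat.rec (pick 0) (fun _ p => pick (p.natAbs + g)) k with hf0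
  have hmem : ∀ k, f0 k ∈ T := by intro k; cases k <;> exact h1 _
  have hstep : ∀ k, (f0 k).natAbs + g < (f0 (k+1)).natAbs := fun k => h2 _
  have hmono : ∀ i j : ℕ, i < j → (f0 i).natAbs + g < (f0 j).natAbs := by
    intro i j hij
    induction j with
    | zero => omega
    | succ j ih =>
      rcases Nat.lt_succ_iff_lt_or_eq.1 hij with h | h
      · have := ih h; have := hstep j; omega
      · subst h; exact hstep i
  refine ⟨fun k => f0 k.val, fun k => hmem _, fun i j hij => ?_⟩
  have := hmono i.val j.val hij
  show (g : ℤ) < |f0 j.val - f0 i.val|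
  rw [Int.abs_eq_natAbs]
  omega

lemma count_aux (A C n : ℕ) (hA : 2 ≤ A) (hn : (C-1)*(A-1) < n) :
    (A-1)^n * C < A^n := by
  set B := A - 1 with hB
  have hB1 : 1 ≤ B := by omega
  have claim : ∀ k, B^k * (B + k) ≤ A^k * B := by
    intro k
    induction k with
    | zero => simp
    | succ k ih =>
      have hBA : B ^ k ≤ A ^ k := Nat.pow_le_pow_left (by omega) k
      have hAp : 0 < A ^ k := pow_pos (by omega) k
      have h3 : B^k * B ≤ A^k * B := Nat.mul_le_mul_right B hBA
      have h4 : B + 1 = A := by omega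
      calc B^(k+1) * (B + (k+1)) = B * (B^k * (B+k)) + B^(k+1) := by ring
        _ ≤ B * (A^k * B) + B^k * B := by
            have h5 := Nat.mul_le_mul_left B ih
            have h6 : B^(k+1) = B^k * B := by ring
            omega
        _ ≤ B * (A^k * B) + A^k * B := by omega
        _ = A^k * B * (B+1) := by ring
        _ = A^(k+1) * B := by rw [h4]; ring
  have hBn : 0 < B^n := pow_pos (by omega) n
  have hCB : C * B < B + n := by
    rcases C with _ | c
    · simp; omega
    · have e1 : (c+1) * B = c*B + B := by ring
      have e2 : (c+1-1)*B = c*B := by simp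
      rw [e2] at hn
      omega
  have h1 : B^n * (C * B) < B^n * (B + n) := mul_lt_mul_of_pos_left hCB hBn
  have h2 := claim n
  have : B^n * C * B < A^n * B := by
    calc B^n * C * B = B^n * (C * B) := by ring
      _ < B^n * (B + n) := h1
      _ ≤ A^n * B := h2
  exact Nat.lt_of_mul_lt_mul_right this

lemma swap_lemma {S : Type} {m : ℕ} (N : Fin m → ℤ) (θ : ℤ → ((Fin m → S) → S))
    (R : ℤ) (hR0 : 0 ≤ R) (hR : ∀ i, |N i| ≤ R)
    (c e : ℤ → S) (a b : ℤ)
    (hce : ∀ y, y ∉ Set.Icc a b → c y = e y)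
    (hHce : ∀ x : ℤ, θ x (fun i => c (x + N i)) = θ x (fun i => e (x + N i)))
    {n : ℕ} (t : Fin n → ℤ)
    (ht : ∀ k, ∀ y ∈ Set.Icc (a - R) (b + R), θ (y + t k) = θ y)
    (hsep : ∀ j k : Fin n, ∀ x : ℤ, x ∈ Set.Icc (a - 2*R + t j) (b + 2*R + t j) →
       x ∈ Set.Icc (a - 2*R + t k) (b + 2*R + t k) → j = k)
    (z : ℤ → S) :
    ∃ z' : ℤ → S,
      (∀ x, θ x (fun i => z' (x + N i)) = θ x (fun i => z (x + N i))) ∧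
      (∀ y, (∀ k, y ∉ Set.Icc (a + t k) (b + t k)) → z' y = z y) ∧
      (∀ k, ¬ (∀ x ∈ Set.Icc (a - 2*R + t k) (b + 2*R + t k), z x = c (x - t k)) →
        ∀ x ∈ Set.Icc (a - 2*R + t k) (b + 2*R + t k), z' x = z x) ∧
      (∀ k, (∀ x ∈ Set.Icc (a - 2*R + t k) (b + 2*R + t k), z x = c (x - t k)) →
        ∀ x ∈ Set.Icc (a + t k) (b + t k), z' x = e (x - t k)) := by
  classical
  set M : Fin n → Prop := fun k => ∀ x ∈ Set.Icc (a - 2*R + t k) (b + 2*R + t k), z x = c (x - t k) with hM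
  set z' : ℤ → S := fun y => if h : ∃ k, y ∈ Set.Icc (a + t k) (b + t k) ∧ M k then e (y - t h.choose) else z y with hz'
  have hJK : ∀ (k : Fin n) (y : ℤ), y ∈ Set.Icc (a + t k) (b + t k) →
      y ∈ Set.Icc (a - 2*R + t k) (b + 2*R + t k) := by
    intro k y hy
    simp only [Set.mem_Icc] at hy ⊢
    omega
  have hval_out : ∀ y, (¬ ∃ k, y ∈ Set.Icc (a + t k) (b + t k) ∧ M k) → z' y = z y := by
    intro y h; rw [hz']; exact dif_neg h
  have hval_in : ∀ (k : Fin n), M k → ∀ y ∈ Set.Icc (a + t k) (b + t k), z' y = e (y - t k) := by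
    intro k hk y hy
    have hex : ∃ j, y ∈ Set.Icc (a + t j) (b + t j) ∧ M j := ⟨k, hy, hk⟩
    rw [hz']
    simp only []
    rw [dif_pos hex]
    have hspec := hex.choose_spec
    have : hex.choose = k := hsep _ _ y (hJK _ _ hspec.1) (hJK _ _ hy)
    rw [this]
  refine ⟨z', ?_, ?_, ?_, ?_⟩
  · -- main equality
    intro x
    by_cases hx : ∃ k, x ∈ Set.Icc (a - R + t k) (b + R + t k)
    · obtain ⟨k, hxk⟩ := hx
      have hKi : ∀ i : Fin m, x + N i ∈ Set.Icc (a - 2*R + t k) (b + 2*R + t k) := by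
        intro i
        have h1 := abs_le.1 (hR i)
        simp only [Set.mem_Icc] at hxk ⊢
        omega
      by_cases hMk : M k
      · have hnb : ∀ i, z' (x + N i) = e (x - t k + N i) := by
          intro i
          by_cases hcond : ∃ j, x + N i ∈ Set.Icc (a + t j) (b + t j) ∧ M j
          · obtain ⟨j, hj1, hj2⟩ := hcond
            have hjk : j = k := hsep j k _ (hJK _ _ hj1) (hKi i)
            subst hjk
            rw [hval_in j hj2 _ hj1]
            congr 1; ring
          · have h1 : z' (x + N i) = z (x + N i) := hval_out _ hcond
            have h2 : z (x + N i) = c (x + N i - t k) := hMk _ (hKi i)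
            have h3 : c (x + N i - t k) = e (x + N i - t k) := by
              apply hce
              intro hmem
              apply hcond
              refine ⟨k, ?_, hMk⟩
              simp only [Set.mem_Icc] at hmem ⊢
              omega
            rw [h1, h2, h3]
            congr 1; ring
        have hnbz : ∀ i, z (x + N i) = c (x - t k + N i) := by
          intro i
          rw [hMk _ (hKi i)]
          congr 1; ring
        have hθk : θ x = θ (x - t k) := by
          have h := ht k (x - t k) (by simp only [Set.mem_Icc] at hxk ⊢; omega)
          rw [← h]
          congr 1; ring
        calc θ x (fun i => z' (x + N i)) = θ x (fun i => e (x - t k + N i)) := by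
              congr 1; funext i; exact hnb i
          _ = θ ((x - t k)) (fun i => e ((x - t k) + N i)) := by rw [← hθk]
          _ = θ ((x - t k)) (fun i => c ((x - t k) + N i)) := (hHce (x - t k)).symm
          _ = θ x (fun i => c (x - t k + N i)) := by rw [← hθk]
          _ = θ x (fun i => z (x + N i)) := by congr 1; funext i; exact (hnbz i).symm
      · have heq : ∀ i, z' (x + N i) = z (x + N i) := by
          intro i
          apply hval_out
          rintro ⟨j, hj1, hj2⟩
          have : j = k := hsep j k _ (hJK _ _ hj1) (hKi i)
          exact hMk (this ▸ hj2)
        congr 1; funext i; exact heq i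
    · push_neg at hx
      have heq : ∀ i, z' (x + N i) = z (x + N i) := by
        intro i
        apply hval_out
        rintro ⟨j, hj1, hj2⟩
        apply hx j
        have h1 := abs_le.1 (hR i)
        simp only [Set.mem_Icc] at hj1 ⊢
        omega
      congr 1; funext i; exact heq i
  · intro y hy
    exact hval_out y (fun ⟨k, hk, _⟩ => hy k hk)
  · intro k hMk x hxK
    apply hval_out
    rintro ⟨j, hj1, hj2⟩
    have : j = k := hsep j k _ (hJK _ _ hj1) hxK
    exact hMk (this ▸ hj2)
  · exact hval_in

set_option maxHeartbeats 1000000 in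
/-- if `θ` is a recurrent rule distribution over ℤ and the global
update rule `H_θ` of the 1-dimensional NUCA is not pre-injective, then it is not
surjective. -/
theorem stmt_8 {S : Type} [Fintype S] [Nonempty S] {m : ℕ}
    (N : Fin m → ℤ) (θ : ℤ → ((Fin m → S) → S))
    (hrec : Recurrent θ)
    (H : (ℤ → S) → (ℤ → S))
    (hH : H = fun c x => θ x (fun i => c (x + N i)))
    (hnp : ¬ PreInjective H) :
    ¬ Function.Surjective H := by
  classical
  subst hH
  intro hsurj
  rw [PreInjective] at hnp
  push_neg at hnp
  obtain ⟨c, e, hfin, hHce, hne⟩ := hnp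
  have hHce' : ∀ x, θ x (fun i => c (x + N i)) = θ x (fun i => e (x + N i)) :=
    fun x => congrFun hHce x
  -- radius
  set r : ℕ := Finset.univ.sup (fun i => (N i).natAbs) with hrdef
  set R : ℤ := (r : ℤ) with hRdef
  have hR0 : 0 ≤ R := Int.natCast_nonneg r
  have hR : ∀ i, |N i| ≤ R := by
    intro i
    rw [hRdef, Int.abs_eq_natAbs]
    have h1 : (N i).natAbs ≤ r := by
      rw [hrdef]; exact Finset.le_sup (f := fun i => (N i).natAbs) (Finset.mem_univ i)
    exact_mod_cast h1
  -- the interval [a, b] containing the difference set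
  have hne' : ∃ x₀, c x₀ ≠ e x₀ := by
    by_contra h; push_neg at h; exact hne (funext h)
  obtain ⟨x₀, hx₀⟩ := hne'
  set F := hfin.toFinset with hF
  have hFne : F.Nonempty := ⟨x₀, hfin.mem_toFinset.2 hx₀⟩
  set a := F.min' hFne with ha
  set b := F.max' hFne with hb
  have hab : a ≤ b := F.min'_le _ (F.max'_mem hFne)
  have hx₀ab : a ≤ x₀ ∧ x₀ ≤ b :=
    ⟨F.min'_le _ (hfin.mem_toFinset.2 hx₀), F.le_max' _ (hfin.mem_toFinset.2 hx₀)⟩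
  have hce : ∀ y, y ∉ Set.Icc a b → c y = e y := by
    intro y hy
    by_contra h
    have hyF : y ∈ F := hfin.mem_toFinset.2 h
    exact hy ⟨F.min'_le _ hyF, F.le_max' _ hyF⟩
  -- cardinalities
  set q := Fintype.card S with hq
  have hq2 : 2 ≤ q := by
    have : Nontrivial S := ⟨⟨c x₀, e x₀, hx₀⟩⟩
    exact Fintype.one_lt_card_iff_nontrivial.2 this
  set κ := (b - a + 4*R + 1).toNat with hκdef
  have hκZ : (κ : ℤ) = b - a + 4*R + 1 := Int.toNat_of_nonneg (by omega)
  have hκ1 : 4*r + 1 ≤ κ := by omega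
  set n := (q^(2*r) - 1) * (q^κ - 1) + 1 with hndef
  have hn0 : 0 < n := by omega
  -- recurrence: pick n well-separated shifts
  have hTinf := recur_infinite hrec (Finset.Icc (a - R) (b + R))
  obtain ⟨t, htT, htsep⟩ := exists_sep hTinf n (b - a + 4*R).toNat
  have ht : ∀ k : Fin n, ∀ y ∈ Set.Icc (a - R) (b + R), θ (y + t k) = θ y := by
    intro k y hy
    exact htT k y (Finset.mem_Icc.2 ⟨hy.1, hy.2⟩)
  have hgz : (((b - a + 4*R).toNat) : ℤ) = b - a + 4*R := Int.toNat_of_nonneg (by omega)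
  have hsep : ∀ j k : Fin n, ∀ x : ℤ, x ∈ Set.Icc (a - 2*R + t j) (b + 2*R + t j) →
      x ∈ Set.Icc (a - 2*R + t k) (b + 2*R + t k) → j = k := by
    intro j k x hxj hxk
    by_contra hjk
    simp only [Set.mem_Icc] at hxj hxk
    rcases Ne.lt_or_gt hjk with h | h
    · have h2 := htsep j k h
      rcases abs_cases (t k - t j) with ⟨h1, _⟩ | ⟨h1, _⟩ <;> omega
    · have h2 := htsep k j h
      rcases abs_cases (t j - t k) with ⟨h1, _⟩ | ⟨h1, _⟩ <;> omega
  -- the big interval E = [A, B]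
  have hFinNe : (Finset.univ : Finset (Fin n)).Nonempty := ⟨⟨0, hn0⟩, Finset.mem_univ _⟩
  set A := Finset.univ.inf' hFinNe (fun k => a - 2*R + t k) with hA
  set B := Finset.univ.sup' hFinNe (fun k => b + 2*R + t k) with hB
  have hABk : ∀ k : Fin n, A ≤ a - 2*R + t k ∧ b + 2*R + t k ≤ B := by
    intro k
    constructor
    · rw [hA]; exact Finset.inf'_le _ (Finset.mem_univ k)
    · rw [hB]; exact Finset.le_sup' (fun k => b + 2*R + t k) (Finset.mem_univ k)
  have hABr : A + 4*R ≤ B := by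
    have h1 := hABk ⟨0, hn0⟩; omega
  set E := Finset.Icc A B with hE
  set ext : ((↥E) → S) → ℤ → S :=
    fun u y => if h : y ∈ E then u ⟨y, h⟩ else c y with hext
  set σ : ((↥E) → S) → ((↥(Finset.Icc (A+R) (B-R))) → S) :=
    fun u x => θ (x : ℤ) (fun i => ext u ((x : ℤ) + N i)) with hσ
  set Mat : ((↥E) → S) → Fin n → Prop :=
    fun u k => ∀ x ∈ Set.Icc (a - 2*R + t k) (b + 2*R + t k), ext u x = c (x - t k) with hMat
  have hKE : ∀ k : Fin n, ∀ x : ℤ, x ∈ Set.Icc (a - 2*R + t k) (b + 2*R + t k) → x ∈ E := by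
    intro k x hx
    have h1 := hABk k
    simp only [Set.mem_Icc] at hx
    rw [hE, Finset.mem_Icc]
    omega
  -- KEY: σ is surjective even restricted to patterns avoiding all c-patterns
  have key : ∀ p : (↥(Finset.Icc (A+R) (B-R))) → S, ∃ u, (∀ k, ¬ Mat u k) ∧ σ u = p := by
    intro p
    set w : ℤ → S := fun y => if h : y ∈ Finset.Icc (A+R) (B-R) then p ⟨y, h⟩ else c y with hw
    obtain ⟨z, hz⟩ := hsurj w
    set z₁ : ℤ → S := ext (fun x : ↥E => z x) with hz₁
    have hz₁E : ∀ y, y ∈ E → z₁ y = z y := by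
      intro y hy
      rw [hz₁, hext]
      simp only [dif_pos hy]
    have hz₁O : ∀ y, y ∉ E → z₁ y = c y := by
      intro y hy
      rw [hz₁, hext]
      simp only [dif_neg hy]
    obtain ⟨z', hs1, hs2, hs3, hs4⟩ := swap_lemma N θ R hR0 hR c e a b hce hHce' t ht hsep z₁
    set u : ↥E → S := fun x => z' x with hu
    have hextu : ext u = z' := by
      funext y
      by_cases hy : y ∈ E
      · rw [hext]
        simp only [dif_pos hy, hu]
      · rw [hext]
        simp only [dif_neg hy]
        have h2 : ∀ k : Fin n, y ∉ Set.Icc (a + t k) (b + t k) := by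
          intro k hk
          refine hy (hKE k y ?_)
          simp only [Set.mem_Icc] at hk ⊢
          omega
        rw [hs2 y h2, hz₁O y hy]
    refine ⟨u, ?_, ?_⟩
    · intro k hk
      simp only [hMat] at hk
      rw [hextu] at hk
      by_cases hm : ∀ x ∈ Set.Icc (a - 2*R + t k) (b + 2*R + t k), z₁ x = c (x - t k)
      · have hmem : x₀ + t k ∈ Set.Icc (a + t k) (b + t k) := by
          simp only [Set.mem_Icc]; omega
        have hmemK : x₀ + t k ∈ Set.Icc (a - 2*R + t k) (b + 2*R + t k) := by
          simp only [Set.mem_Icc]; omega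
        have h1 := hs4 k hm (x₀ + t k) hmem
        have h2 := hk (x₀ + t k) hmemK
        have h3 : x₀ + t k - t k = x₀ := by ring
        rw [h3] at h1 h2
        exact hx₀ (h2.symm.trans h1)
      · push_neg at hm
        obtain ⟨x, hxK, hxne⟩ := hm
        have h1 := hs3 k (fun hall => hxne (hall x hxK)) x hxK
        refine hxne ?_
        rw [← h1]
        exact hk x hxK
    · funext xx
      obtain ⟨x, hxmem⟩ := xx
      have hxm := Finset.mem_Icc.1 hxmem
      simp only [hσ]
      rw [hextu]
      rw [hs1 x]
      have hnb : (fun i => z₁ (x + N i)) = (fun i => z (x + N i)) := by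
        funext i
        apply hz₁E
        have h1 := abs_le.1 (hR i)
        rw [hE, Finset.mem_Icc]
        omega
      rw [hnb]
      have h2 := congrFun hz x
      simp only [] at h2
      rw [h2, hw]
      simp only [dif_pos hxmem]
  -- counting
  set Kk : Fin n → Finset ℤ := fun k => Finset.Icc (a - 2*R + t k) (b + 2*R + t k) with hKk
  have hKkE : ∀ k, Kk k ⊆ E := by
    intro k x hx
    refine hKE k x ?_
    simp only [hKk, Finset.mem_Icc] at hx
    simp only [Set.mem_Icc]
    omega
  set U := Finset.univ.biUnion Kk with hU
  have hUE : U ⊆ E := by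
    rw [hU]
    exact Finset.biUnion_subset.2 (fun k _ => hKkE k)
  set rest := E \ U with hrest
  have hcard1 : Fintype.card ((↥(Finset.Icc (A+R) (B-R))) → S) ≤
      Fintype.card {u : (↥E) → S // ∀ k, ¬ Mat u k} := by
    apply Fintype.card_le_of_surjective (fun u => σ u.1)
    intro p
    obtain ⟨u, h1, h2⟩ := key p
    exact ⟨⟨u, h1⟩, h2⟩
  have hΦaux : ∀ (u : {u : (↥E) → S // ∀ k, ¬ Mat u k}) (k : Fin n),
      (fun y : ↥(Kk k) => ext u.1 (y : ℤ)) ≠ fun y : ↥(Kk k) => c ((y:ℤ) - t k) := by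
    intro u k heq
    apply u.2 k
    simp only [hMat]
    intro x hx
    have hxK : x ∈ Kk k := by
      simp only [hKk, Finset.mem_Icc]
      simp only [Set.mem_Icc] at hx
      omega
    exact congrFun heq ⟨x, hxK⟩
  have hcard2 : Fintype.card {u : (↥E) → S // ∀ k, ¬ Mat u k} ≤
      Fintype.card ((∀ k : Fin n, {v : (↥(Kk k)) → S // v ≠ fun y : ↥(Kk k) => c ((y:ℤ) - t k)}) × ((↥rest) → S)) := by
    set Φ : {u : (↥E) → S // ∀ k, ¬ Mat u k} →
        ((∀ k : Fin n, {v : (↥(Kk k)) → S // v ≠ fun y : ↥(Kk k) => c ((y:ℤ) - t k)}) × ((↥rest) → S)) :=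
      fun u => (fun k => ⟨fun y => ext u.1 (y : ℤ), hΦaux u k⟩, fun y => ext u.1 (y : ℤ)) with hΦ
    apply Fintype.card_le_of_injective Φ
    intro u v h
    rw [hΦ] at h
    simp only [Prod.mk.injEq] at h
    obtain ⟨h1, h2⟩ := h
    apply Subtype.ext
    funext xx
    obtain ⟨x, hx⟩ := xx
    have e1 : ∀ (uu : (↥E) → S), uu ⟨x, hx⟩ = ext uu x := by
      intro uu
      rw [hext]
      simp only [dif_pos hx]
    rw [e1 u.1, e1 v.1]
    by_cases hxU : x ∈ U
    · rw [hU] at hxU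
      obtain ⟨k, _, hk⟩ := Finset.mem_biUnion.1 hxU
      exact congrFun (congrArg Subtype.val (congrFun h1 k)) ⟨x, hk⟩
    · have hxrest : x ∈ rest := by
        rw [hrest]
        exact Finset.mem_sdiff.2 ⟨hx, hxU⟩
      exact congrFun h2 ⟨x, hxrest⟩
  -- cardinal computations
  have hKkcard : ∀ k, (Kk k).card = κ := by
    intro k
    simp only [hKk]
    rw [Int.card_Icc]
    omega
  have hdisj : ∀ j ∈ (Finset.univ : Finset (Fin n)), ∀ k ∈ Finset.univ, j ≠ k → Disjoint (Kk j) (Kk k) := by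
    intro j _ k _ hjk
    rw [Finset.disjoint_left]
    intro x hxj hxk
    apply hjk
    refine hsep j k x ?_ ?_ <;>
      (simp only [hKk, Finset.mem_Icc] at hxj hxk; simp only [Set.mem_Icc]; omega)
  have hUcard : U.card = n * κ := by
    rw [hU, Finset.card_biUnion hdisj]
    rw [Finset.sum_congr rfl (fun k _ => hKkcard k), Finset.sum_const, Finset.card_univ,
      Fintype.card_fin, smul_eq_mul]
  have hEcard : E.card = (B + 1 - A).toNat := by rw [hE, Int.card_Icc]
  have hIcard : (Finset.Icc (A+R) (B-R)).card = (B + 1 - A).toNat - 2*r := by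
    rw [Int.card_Icc]
    omega
  have hrestcard : rest.card = (B+1-A).toNat - n * κ := by
    rw [hrest, Finset.card_sdiff_of_subset hUE, hUcard, hEcard]
  have hnκL : n * κ ≤ (B+1-A).toNat := by
    rw [← hEcard, ← hUcard]
    exact Finset.card_le_card hUE
  have hc1 : Fintype.card ((↥(Finset.Icc (A+R) (B-R))) → S) = q ^ ((B+1-A).toNat - 2*r) := by
    rw [Fintype.card_fun, Fintype.card_coe, hIcard]
  have hsub : ∀ k : Fin n, Fintype.card {v : (↥(Kk k)) → S // v ≠ fun y : ↥(Kk k) => c ((y:ℤ) - t k)} = q^κ - 1 := by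
    intro k
    calc Fintype.card {v : (↥(Kk k)) → S // v ≠ fun y : ↥(Kk k) => c ((y:ℤ) - t k)}
        = Fintype.card ((↥(Kk k)) → S) - Fintype.card {v : (↥(Kk k)) → S // v = fun y : ↥(Kk k) => c ((y:ℤ) - t k)} :=
          Fintype.card_subtype_compl _
      _ = q^κ - 1 := by
          rw [Fintype.card_subtype_eq, Fintype.card_fun, Fintype.card_coe, hKkcard k]
  have hc2 : Fintype.card ((∀ k : Fin n, {v : (↥(Kk k)) → S // v ≠ fun y : ↥(Kk k) => c ((y:ℤ) - t k)}) × ((↥rest) → S))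
      = (q^κ - 1)^n * q^((B+1-A).toNat - n*κ) := by
    rw [Fintype.card_prod, Fintype.card_pi, Fintype.card_fun, Fintype.card_coe, hrestcard]
    congr 1
    rw [Finset.prod_congr rfl (fun k _ => hsub k), Finset.prod_const, Finset.card_univ,
      Fintype.card_fin]
  set L := (B+1-A).toNat with hL
  have hchain : q ^ (L - 2*r) ≤ (q^κ - 1)^n * q^(L - n*κ) := by
    calc q ^ (L - 2*r) = Fintype.card ((↥(Finset.Icc (A+R) (B-R))) → S) := hc1.symm
      _ ≤ Fintype.card {u : (↥E) → S // ∀ k, ¬ Mat u k} := hcard1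
      _ ≤ _ := hcard2
      _ = (q^κ - 1)^n * q^(L - n*κ) := hc2
  have h2r : 2*r ≤ n*κ := by
    have h3 : κ ≤ n*κ := Nat.le_mul_of_pos_left κ hn0
    omega
  have hLsplit : L - 2*r = (n*κ - 2*r) + (L - n*κ) := by omega
  rw [hLsplit, pow_add] at hchain
  have hqpos : 0 < q^(L - n*κ) := pow_pos (by omega) _
  have hle : q^(n*κ - 2*r) ≤ (q^κ - 1)^n := Nat.le_of_mul_le_mul_right hchain hqpos
  have hfinal : q^(n*κ) ≤ (q^κ - 1)^n * q^(2*r) := by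
    calc q^(n*κ) = q^(n*κ - 2*r) * q^(2*r) := by
          rw [← pow_add]
          congr 1
          omega
      _ ≤ (q^κ - 1)^n * q^(2*r) := Nat.mul_le_mul_right _ hle
  have hA2 : 2 ≤ q^κ := by
    calc 2 ≤ q := hq2
      _ = q^1 := (pow_one q).symm
      _ ≤ q^κ := Nat.pow_le_pow_right (by omega) (by omega)
  have hlt := count_aux (q^κ) (q^(2*r)) n hA2 (by rw [hndef]; exact Nat.lt_succ_self _)
  rw [← pow_mul, Nat.mul_comm κ n] at hlt
  omega
end

section
/- Let n ≥ 1, Σ = ℤ₂, and let f_n, g_n be the local rules with neighbourhood (-n,…,n) defined by f_n(a_{-n},…,a_n) = a_{-n} ⊕ a_0 and g_n(a_{-n},…,a_n) = a_{-n+1} ⊕ ⋯ ⊕ a_n (mod 2 sums). Let θ ∈ {f_n, g_n}^ℤ be a rule distribution containing the pattern g_n (f_n)^n (i.e., there exists x with θ(x) = g_n and θ(x+1) = ⋯ = θ(x+n) = f_n). Then the configuration c with c(x) = 1 and c(x+1) = ⋯ = c(x+n) = 0 (and arbitrary elsewhere, e.g. 0) has no H_θ-preimage; in particular H_θ is not surjective.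 -/
/-- Global update rule of the NUCA over ℤ with state set ℤ₂ whose local rule at cell `y`
is `f_n(a₋ₙ,…,aₙ) = a₋ₙ ⊕ a₀` when `θ y = true` and
`g_n(a₋ₙ,…,aₙ) = a₋ₙ₊₁ ⊕ ⋯ ⊕ aₙ` when `θ y = false`. -/
noncomputable def fgRule (n : ℕ) (θ : ℤ → Bool) (e : ℤ → ZMod 2) (y : ℤ) : ZMod 2 :=
  if θ y then e (y - n) + e y
  else ∑ i ∈ Finset.Icc (1 - (n : ℤ)) (n : ℤ), e (y + i)

/-- if `θ` contains the pattern `g_n (f_n)^n` at position `x`, then any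
configuration `c` with `c x = 1` and `c (x+1) = ⋯ = c (x+n) = 0` has no preimage under
`H_θ`; in particular `H_θ` is not surjective. -/
theorem stmt_10 (n : ℕ) (hn : 1 ≤ n) (θ : ℤ → Bool) (x : ℤ)
    (hg : θ x = false) (hf : ∀ i : ℤ, 1 ≤ i → i ≤ n → θ (x + i) = true)
    (c : ℤ → ZMod 2) (hcx : c x = 1)
    (hc0 : ∀ i : ℤ, 1 ≤ i → i ≤ n → c (x + i) = 0) :
    (∀ e : ℤ → ZMod 2, fgRule n θ e ≠ c) ∧ ¬ Function.Surjective (fgRule n θ) := by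

  have key : ∀ e : ℤ → ZMod 2, fgRule n θ e ≠ c := by
    intro e he
    have h1 : ∑ i ∈ Finset.Icc (1 - (n : ℤ)) (n : ℤ), e (x + i) = 1 := by
      have h := congrFun he x
      rwa [fgRule, hg, if_neg (by simp), hcx] at h
    have h2 : ∀ i : ℤ, 1 ≤ i → i ≤ (n : ℤ) → e (x + (i + -(n : ℤ))) = e (x + i) := by
      intro i hi1 hi2
      have h := congrFun he (x + i)
      rw [fgRule, hf i hi1 hi2, if_pos rfl, hc0 i hi1 hi2] at h
      have : e (x + i - (n : ℤ)) = e (x + i) := by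
        have := add_eq_zero_iff_eq_neg.mp h
        rwa [CharTwo.neg_eq] at this
      rwa [show x + i - (n : ℤ) = x + (i + -(n : ℤ)) by ring] at this
    have hIcc : Finset.Icc (1 - (n : ℤ)) (n : ℤ) = Finset.Ioc (-(n : ℤ)) n := by
      ext j; simp only [Finset.mem_Icc, Finset.mem_Ioc]; omega
    have hn0 : -(n : ℤ) ≤ 0 := by exact_mod_cast neg_nonpos.mpr (Int.ofNat_nonneg n)
    have hn1 : (0 : ℤ) ≤ n := Int.ofNat_nonneg n
    have hsplit : ∑ j ∈ Finset.Ioc (-(n : ℤ)) 0, e (x + j) + ∑ j ∈ Finset.Ioc (0 : ℤ) n, e (x + j)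
        = ∑ j ∈ Finset.Ioc (-(n : ℤ)) n, e (x + j) := by
      rw [← Finset.sum_union (by
        simp only [Finset.disjoint_left, Finset.mem_Ioc]
        intro a ha hb; omega), Finset.Ioc_union_Ioc_eq_Ioc hn0 hn1]
    have hmap : ∑ j ∈ Finset.Ioc (-(n : ℤ)) 0, e (x + j)
        = ∑ i ∈ Finset.Ioc (0 : ℤ) n, e (x + (i + -(n : ℤ))) := by
      rw [show Finset.Ioc (-(n : ℤ)) 0 = (Finset.Ioc (0 : ℤ) n).map (addRightEmbedding (-(n : ℤ))) by
        rw [Finset.map_add_right_Ioc]; norm_num, Finset.sum_map]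
      rfl
    rw [hIcc, ← hsplit, hmap, ← Finset.sum_add_distrib] at h1
    have hzero : ∑ i ∈ Finset.Ioc (0 : ℤ) n, (e (x + (i + -(n : ℤ))) + e (x + i)) = 0 := by
      apply Finset.sum_eq_zero
      intro i hi
      rw [Finset.mem_Ioc] at hi
      rw [h2 i hi.1 hi.2, CharTwo.add_self_eq_zero]
    rw [hzero] at h1
    exact one_ne_zero h1.symm
  exact ⟨key, fun hs => (hs c).elim fun e hep => key e hep⟩
end

section
/- Let n ≥ 1, Σ = ℤ₂, and f_n, g_n the local rules with neighbourhood (-n,…,n) given by f_n(a_{-n},…,a_n) = a_{-n} ⊕ a_0 and g_n(a_{-n},…,a_n) = a_{-n+1} ⊕ ⋯ ⊕ a_n. Let θ ∈ {f_n, g_n}^ℤ be a rule distribution in which there is at most one block of n consecutive cells all assigned rule f_n. Then the global update rule H_θ is pre-injective. -/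
section Aux

open Finset

private lemma zmod2_eq_of_add_eq_zero (a b : ZMod 2) (h : a + b = 0) : a = b := by
  revert h; revert a b; decide

/-- Splitting a sum over an integer interval `Ioc a c` at an intermediate point `b`. -/
private lemma sumIocSplit (d : ℤ → ZMod 2) {a b c : ℤ} (h1 : a ≤ b) (h2 : b ≤ c) :
    ∑ x ∈ Finset.Ioc a c, d x
      = ∑ x ∈ Finset.Ioc a b, d x + ∑ x ∈ Finset.Ioc b c, d x := by
  rw [← Finset.Ioc_union_Ioc_eq_Ioc h1 h2, Finset.sum_union]
  rw [Finset.disjoint_left]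
  intro x hx hx'
  simp only [Finset.mem_Ioc] at hx hx'
  omega

private lemma sumIocSingle (d : ℤ → ZMod 2) (a : ℤ) :
    ∑ x ∈ Finset.Ioc (a - 1) a, d x = d a := by
  have : Finset.Ioc (a - 1) a = {a} := by
    ext x; simp only [Finset.mem_Ioc, Finset.mem_singleton]; omega
  rw [this, Finset.sum_singleton]

/-- Key local max lemma: if `R z ≠ 0` and `R` vanishes on `(z, z+n]`, then `θ` is
true on the block `[z-n+1, z]` and `R` is nonzero on `[z-n, z]`. -/
private lemma blockA (n : ℕ) (θ : ℤ → Bool) (R : ℤ → ZMod 2)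
    (hT : ∀ y, θ y = true → R (y - 1) = R y)
    (hF : ∀ y, θ y = false → R (y + n) = R y)
    (z : ℤ) (hz : R z ≠ 0) (htop : ∀ w, z < w → w ≤ z + n → R w = 0) :
    (∀ j : ℕ, j ≤ n → R (z - j) ≠ 0) ∧
    (∀ i : ℤ, 0 ≤ i → i < n → θ (z - n + 1 + i) = true) := by
  have aux : ∀ j : ℕ, j ≤ n → R (z - j) ≠ 0 ∧ (j < n → θ (z - j) = true) := by
    intro j
    induction j with
    | zero =>
      intro _
      constructor
      · simpa using hz
      · intro hlt
        cases hθ : θ (z - (0 : ℕ)) with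
        | true => rfl
        | false =>
          exfalso
          have h1 := hF _ hθ
          have h2 : R (z - (0 : ℕ) + n) = 0 := by
            apply htop <;> push_cast <;> omega
          rw [h2] at h1
          simp only [Nat.cast_zero, sub_zero] at h1
          exact hz h1.symm
    | succ j ih =>
      intro hj1
      have hjn : j ≤ n := by omega
      have hjlt : j < n := by omega
      obtain ⟨hR, hθj⟩ := ih hjn
      have hθj' := hθj hjlt
      have h1 : R (z - j - 1) = R (z - j) := hT (z - j) hθj'
      have hR' : R (z - ((j : ℕ) + 1 : ℕ)) ≠ 0 := by
        have : z - ((j : ℕ) + 1 : ℕ) = z - j - 1 := by push_cast; ring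
        rw [this, h1]; exact hR
      refine ⟨hR', fun hlt => ?_⟩
      cases hθ : θ (z - ((j : ℕ) + 1 : ℕ)) with
      | true => rfl
      | false =>
        exfalso
        have h2 := hF _ hθ
        have h3 : R (z - ((j : ℕ) + 1 : ℕ) + n) = 0 := by
          apply htop <;> push_cast <;> omega
        rw [h3] at h2
        exact hR' h2.symm
  constructor
  · intro j hj; exact (aux j hj).1
  · intro i h0 hlt
    set j : ℕ := (n - 1 - i).toNat with hjdef
    have hji : (j : ℤ) = n - 1 - i := Int.toNat_of_nonneg (by omega)
    have h2 := (aux j (by omega)).2 (by omega)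
    have : z - (j : ℤ) = z - n + 1 + i := by rw [hji]; ring
    rwa [this] at h2

/-- The combinatorial core: the constraints on the window sums `R`, with `R` of
finite nonempty support and at most one `f`-block in `θ`, are contradictory. -/
private lemma core (n : ℕ) (hn : 1 ≤ n) (θ : ℤ → Bool)
    (hone : ∀ x y : ℤ, (∀ i : ℤ, 0 ≤ i → i < n → θ (x + i) = true) →
      (∀ i : ℤ, 0 ≤ i → i < n → θ (y + i) = true) → x = y)
    (R : ℤ → ZMod 2)
    (hT : ∀ y, θ y = true → R (y - 1) = R y)
    (hF : ∀ y, θ y = false → R (y + n) = R y)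
    (hfin : {y : ℤ | R y ≠ 0}.Finite)
    (hne : ∃ y, R y ≠ 0) : False := by
  classical
  set Sf : Finset ℤ := hfin.toFinset with hSf
  have hmem : ∀ y : ℤ, y ∈ Sf ↔ R y ≠ 0 := by
    intro y; rw [hSf, Set.Finite.mem_toFinset]; rfl
  obtain ⟨y₀, hy₀⟩ := hne
  have hSne : Sf.Nonempty := ⟨y₀, (hmem y₀).2 hy₀⟩
  set ystar : ℤ := Sf.max' hSne with hystar
  set u : ℤ := Sf.min' hSne with hu
  have hys : R ystar ≠ 0 := (hmem _).1 (Sf.max'_mem hSne)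
  have hRu : R u ≠ 0 := (hmem _).1 (Sf.min'_mem hSne)
  have hmax : ∀ y, R y ≠ 0 → y ≤ ystar := fun y hy => Sf.le_max' y ((hmem y).2 hy)
  have hmin : ∀ y, R y ≠ 0 → u ≤ y := fun y hy => Sf.min'_le y ((hmem y).2 hy)
  have htop : ∀ w, ystar < w → w ≤ ystar + n → R w = 0 := by
    intro w h1 _
    by_contra h
    have := hmax w h
    omega
  obtain ⟨Ra, hblk⟩ := blockA n θ R hT hF ystar hys htop
  -- R is nonzero on all of [ystar - n, ystar]
  have Ra' : ∀ w, ystar - n ≤ w → w ≤ ystar → R w ≠ 0 := by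
    intro w h1 h2
    have hji : ((ystar - w).toNat : ℤ) = ystar - w := Int.toNat_of_nonneg (by omega)
    have := Ra (ystar - w).toNat (by omega)
    have heq : ystar - ((ystar - w).toNat : ℤ) = w := by rw [hji]; ring
    rwa [heq] at this
  have hu_le : u ≤ ystar - n := by
    have := hmin (ystar - n) (by simpa using Ra n le_rfl)
    omega
  -- Step C : entering the support from strictly below the minimum forces a true cell
  have stepC : ∀ z, R z ≠ 0 → z - n < u → θ (z - n) = true := by
    intro z hz hlt
    cases hθ : θ (z - n) with
    | true => rfl
    | false =>
      exfalso
      have h1 := hF _ hθ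
      have h2 : z - (n : ℤ) + n = z := by ring
      rw [h2] at h1
      have h3 : R (z - n) ≠ 0 := by rw [← h1]; exact hz
      have := hmin _ h3
      omega
  -- hole descent: a "hole" strictly below the block region is impossible
  have holeFalse : ∀ m : ℕ, ∀ z : ℤ, R z = 0 → R (z - 1) ≠ 0 → z ≤ ystar - n - 1 →
      (ystar - n - 1 - z).toNat = m → False := by
    intro m
    induction m using Nat.strong_induction_on with
    | _ m ih =>
      intro z hz0 hzm1 hzle hzm
      have hθz : θ z = false := by
        cases hθ : θ z with
        | false => rfl
        | true =>
          exfalso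
          have := hT z hθ
          rw [hz0] at this
          exact hzm1 this
      have hzn : R (z + n) = 0 := by rw [hF z hθz]; exact hz0
      set T : Finset ℤ := (Finset.Ioo z (z + n)).filter (fun w => R w ≠ 0) with hTdef
      by_cases hTne : T.Nonempty
      · set q : ℤ := T.max' hTne with hq
        have hqmem : q ∈ T := T.max'_mem hTne
        rw [hTdef, Finset.mem_filter, Finset.mem_Ioo] at hqmem
        obtain ⟨⟨hq1, hq2⟩, hq3⟩ := hqmem
        have hq10 : R (q + 1) = 0 := by
          by_contra h
          rcases eq_or_lt_of_le (show q + 1 ≤ z + n by omega) with he | hlt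
          · rw [he] at h; exact h hzn
          · have : q + 1 ∈ T := by
              rw [hTdef, Finset.mem_filter, Finset.mem_Ioo]
              exact ⟨⟨by omega, hlt⟩, h⟩
            have := T.le_max' _ this
            omega
        have hz'le : q + 1 ≤ ystar - n - 1 := by
          by_contra h
          have h1 : ystar - n ≤ q + 1 := by omega
          have h2 : q + 1 ≤ ystar := by omega
          exact (Ra' (q + 1) h1 h2) hq10
        have hprev : R (q + 1 - 1) ≠ 0 := by
          have : q + 1 - 1 = q := by ring
          rw [this]; exact hq3
        exact ih ((ystar - n - 1 - (q + 1)).toNat) (by omega) (q + 1) hq10 hprev hz'le rfl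
      · -- no support in (z, z+n) : gap, second block near z - 1
        have hzero : ∀ w, z < w → w < z + n → R w = 0 := by
          intro w h1 h2
          by_contra h
          exact hTne ⟨w, by rw [hTdef, Finset.mem_filter, Finset.mem_Ioo]; exact ⟨⟨h1, h2⟩, h⟩⟩
        have htop2 : ∀ w, z - 1 < w → w ≤ z - 1 + n → R w = 0 := by
          intro w h1 h2
          rcases eq_or_lt_of_le (show z ≤ w by omega) with he | hlt
          · rw [← he]; exact hz0
          · exact hzero w hlt (by omega)
        obtain ⟨_, hblk2⟩ := blockA n θ R hT hF (z - 1) hzm1 htop2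
        have := hone (z - 1 - n + 1) (ystar - n + 1) hblk2 hblk
        omega
  -- Step D : R is nonzero on all of [u, u + n - 1]
  have stepD : ∀ k : ℕ, k < n → R (u + k) ≠ 0 := by
    by_contra h
    push_neg at h
    obtain ⟨k, hk, hk0⟩ := h
    have hex : ∃ k : ℕ, k < n ∧ R (u + k) = 0 := ⟨k, hk, hk0⟩
    set k₀ : ℕ := Nat.find hex with hk₀
    obtain ⟨hk₀n, hk₀0⟩ := Nat.find_spec hex
    rw [← hk₀] at hk₀n hk₀0
    have hk₀pos : 0 < k₀ := by
      rcases Nat.eq_zero_or_pos k₀ with h0 | h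
      · exfalso
        rw [h0] at hk₀0
        simp only [Nat.cast_zero, add_zero] at hk₀0
        exact hRu hk₀0
      · exact h
    have hprev : R (u + k₀ - 1) ≠ 0 := by
      have hmin' := Nat.find_min hex (show k₀ - 1 < k₀ by omega)
      rw [not_and] at hmin'
      have := hmin' (by omega)
      have hc : ((k₀ - 1 : ℕ) : ℤ) = (k₀ : ℤ) - 1 := by omega
      rw [hc] at this
      have he : u + ((k₀ : ℤ) - 1) = u + k₀ - 1 := by ring
      rwa [he] at this
    have hz₀le : u + (k₀ : ℤ) ≤ ystar - n - 1 := by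
      by_contra hcon
      have h1 : ystar - n ≤ u + k₀ := by omega
      have h2 : u + (k₀ : ℤ) ≤ ystar := by omega
      exact (Ra' _ h1 h2) hk₀0
    exact holeFalse ((ystar - n - 1 - (u + k₀)).toNat) (u + k₀) hk₀0 hprev hz₀le rfl
  -- Step E : second block at u - n
  have hblk3 : ∀ i : ℤ, 0 ≤ i → i < n → θ (u - n + i) = true := by
    intro i h0 hi
    have hcast : ((i.toNat : ℤ)) = i := Int.toNat_of_nonneg h0
    have hR : R (u + i) ≠ 0 := by
      have := stepD i.toNat (by omega)
      rwa [hcast] at this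
    have := stepC (u + i) hR (by omega)
    have he : u + i - n = u - n + i := by ring
    rwa [he] at this
  have := hone (u - n) (ystar - n + 1) hblk3 hblk
  omega

end Aux

/-- if `θ` has at most one block of `n` consecutive cells all assigned
rule `f_n` (any two starting positions of such blocks coincide), then `H_θ` is
pre-injective. -/
theorem stmt_11 (n : ℕ) (hn : 1 ≤ n) (θ : ℤ → Bool)
    (hone : ∀ x y : ℤ, (∀ i : ℤ, 0 ≤ i → i < n → θ (x + i) = true) →
      (∀ i : ℤ, 0 ≤ i → i < n → θ (y + i) = true) → x = y) :
    PreInjective (fgRule n θ) := by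
  classical
  intro c e hdiff hH
  by_contra hne
  -- the difference configuration
  set d : ℤ → ZMod 2 := fun y => c y - e y with hd
  have hd_fin : {x : ℤ | d x ≠ 0}.Finite := by
    have : {x : ℤ | d x ≠ 0} = {x : ℤ | c x ≠ e x} := by
      ext x; simp [hd, sub_ne_zero]
    rw [this]; exact hdiff
  have hd_ne : ∃ x, d x ≠ 0 := by
    by_contra h
    push_neg at h
    apply hne
    funext x
    have := h x
    rw [hd] at this
    simp only [sub_eq_zero] at this
    exact this
  -- d is in the kernel
  have hker : ∀ y, fgRule n θ d y = 0 := by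
    intro y
    have hcy := congrFun hH y
    by_cases hb : θ y
    · simp only [fgRule, hb, if_true] at hcy ⊢
      rw [hd]
      simp only
      linear_combination hcy
    · simp only [fgRule, hb, if_false, Bool.false_eq_true] at hcy ⊢
      rw [hd]
      simp only
      rw [Finset.sum_sub_distrib, hcy, sub_self]
  -- the window sums
  set R : ℤ → ZMod 2 := fun y => ∑ x ∈ Finset.Ioc (y - n) y, d x with hR
  have hRdef : ∀ z : ℤ, R z = ∑ x ∈ Finset.Ioc (z - n) z, d x := by
    intro z; rw [hR]
  have hT : ∀ y, θ y = true → R (y - 1) = R y := by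
    intro y hy
    have key : d (y - n) + d y = 0 := by
      have := hker y
      simp only [fgRule, hy, if_true] at this
      exact this
    have hdd : d (y - n) = d y := zmod2_eq_of_add_eq_zero _ _ key
    have e1 : ∑ x ∈ Finset.Ioc (y - n - 1) y, d x
        = ∑ x ∈ Finset.Ioc (y - n - 1) (y - n), d x + ∑ x ∈ Finset.Ioc (y - n) y, d x :=
      sumIocSplit d (by omega) (by omega)
    have e2 : ∑ x ∈ Finset.Ioc (y - n - 1) y, d x
        = ∑ x ∈ Finset.Ioc (y - n - 1) (y - 1), d x + ∑ x ∈ Finset.Ioc (y - 1) y, d x :=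
      sumIocSplit d (by omega) (by omega)
    have e3 : ∑ x ∈ Finset.Ioc (y - n - 1) (y - n), d x = d (y - n) := by
      have : y - (n : ℤ) - 1 = (y - n) - 1 := by ring
      rw [this, sumIocSingle]
    have e4 : ∑ x ∈ Finset.Ioc (y - 1) y, d x = d y := sumIocSingle d y
    rw [hRdef (y - 1), hRdef y]
    rw [show y - 1 - (n : ℤ) = y - n - 1 from by ring]
    have := e1.symm.trans e2
    rw [e3, e4] at this
    -- this : d (y - n) + ∑ Ioc (y-n) y = ∑ Ioc (y-n-1) (y-1) + d y
    linear_combination hdd - this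
  have hF : ∀ y, θ y = false → R (y + n) = R y := by
    intro y hy
    have key : ∑ i ∈ Finset.Icc (1 - (n : ℤ)) (n : ℤ), d (y + i) = 0 := by
      have := hker y
      simp only [fgRule, hy, Bool.false_eq_true, if_false] at this
      exact this
    have hmap : (Finset.Icc (1 - (n : ℤ)) (n : ℤ)).map (addLeftEmbedding y)
        = Finset.Ioc (y - (n : ℤ)) (y + n) := by
      ext x
      simp only [Finset.mem_map, Finset.mem_Icc, Finset.mem_Ioc, addLeftEmbedding_apply]
      constructor
      · rintro ⟨i, hi, rfl⟩; omega
      · intro hx; exact ⟨x - y, by omega, by ring⟩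
    have key2 : ∑ x ∈ Finset.Ioc (y - (n : ℤ)) (y + n), d x = 0 := by
      rw [← hmap, Finset.sum_map]
      simpa using key
    have e1 : ∑ x ∈ Finset.Ioc (y - n) (y + n), d x
        = ∑ x ∈ Finset.Ioc (y - n) y, d x + ∑ x ∈ Finset.Ioc y (y + n), d x :=
      sumIocSplit d (by omega) (by omega)
    rw [key2] at e1
    rw [hRdef (y + n), hRdef y]
    rw [show y + (n : ℤ) - n = y from by ring]
    exact (zmod2_eq_of_add_eq_zero _ _ e1.symm).symm
  -- finiteness of the support of R
  have hSfin : {y : ℤ | R y ≠ 0}.Finite := by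
    apply Set.Finite.subset
      (Set.Finite.biUnion hd_fin (fun x _ => Set.finite_Icc x (x + n - 1)))
    intro y hy
    rw [Set.mem_setOf_eq, hRdef y] at hy
    obtain ⟨x, hx, hxne⟩ := Finset.exists_ne_zero_of_sum_ne_zero hy
    simp only [Finset.mem_Ioc] at hx
    simp only [Set.mem_iUnion, Set.mem_Icc]
    exact ⟨x, hxne, by omega, by omega⟩
  -- nonemptiness of the support of R
  have hSne : ∃ y, R y ≠ 0 := by
    obtain ⟨x₀, hx₀⟩ := hd_ne
    set Df : Finset ℤ := hd_fin.toFinset with hDf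
    have hDmem : ∀ x : ℤ, x ∈ Df ↔ d x ≠ 0 := by
      intro x; rw [hDf, Set.Finite.mem_toFinset]; rfl
    have hDne : Df.Nonempty := ⟨x₀, (hDmem x₀).2 hx₀⟩
    set M : ℤ := Df.max' hDne with hM
    have hdM : d M ≠ 0 := (hDmem M).1 (Df.max'_mem hDne)
    refine ⟨M + n - 1, ?_⟩
    rw [hRdef]
    have hval : ∑ x ∈ Finset.Ioc (M + (n : ℤ) - 1 - n) (M + n - 1), d x = d M := by
      apply Finset.sum_eq_single_of_mem
      · simp only [Finset.mem_Ioc]; omega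
      · intro b hb hbne
        simp only [Finset.mem_Ioc] at hb
        by_contra hbd
        have : b ≤ M := Df.le_max' b ((hDmem b).2 hbd)
        omega
    rw [hval]
    exact hdM
  exact core n hn θ hone R hT hF hSfin hSne
end
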